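/- arXiv:1911.07363 — 7 statements merged into one kernel-verified Lean document; each statement's English description precedes it below -/
import Mathlib

section
/- Let Q ⊆ ℝⁿ be closed and convex, let f : ℝⁿ → ℝ be convex, let A : ℝⁿ → ℝᵐ be linear, and suppose x* minimizes f over {x ∈ Q : Ax = 0}. Let R_y > 0 and let y* ∈ ℝᵐ satisfy ‖y*‖₂ ≤ R_y and f(x) ≥ f(x*) + ⟨y*, Ax⟩ for all x ∈ Q. Fix ε > 0 and define the penalized objective F(x) = f(x) + (R_y²/ε)·‖Ax‖₂². If a point x^N ∈ Q satisfies F(x^N) − inf_{x∈Q} F(x) ≤ ε, then f(x^N) − f(x*) ≤ ε and ‖A x^N‖₂ ≤ 2ε/R_y. -/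
open scoped RealInnerProductSpace

/-- Theorem 4.1 (penalty reformulation): an `ε`-solution of the penalized problem
`F(x) = f(x) + (R_y²/ε)‖Ax‖²` over `Q` is an `ε`-solution of the affinely
constrained problem with constraint violation at most `2ε/R_y`. -/
theorem penalized_problem_guarantee {n m : ℕ}
    (Q : Set (EuclideanSpace ℝ (Fin n)))
    (hQclosed : IsClosed Q) (hQconvex : Convex ℝ Q)
    (f : EuclideanSpace ℝ (Fin n) → ℝ)
    (hfconvex : ConvexOn ℝ Set.univ f)
    (A : EuclideanSpace ℝ (Fin n) →ₗ[ℝ] EuclideanSpace ℝ (Fin m))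
    (xstar : EuclideanSpace ℝ (Fin n))
    (hxstarQ : xstar ∈ Q) (hxstarFeas : A xstar = 0)
    (hxstarMin : ∀ x ∈ Q, A x = 0 → f xstar ≤ f x)
    (Ry : ℝ) (hRy : 0 < Ry)
    (ystar : EuclideanSpace ℝ (Fin m))
    (hystarNorm : ‖ystar‖ ≤ Ry)
    (hystarDual : ∀ x ∈ Q, f xstar + ⟪ystar, A x⟫ ≤ f x)
    (ε : ℝ) (hε : 0 < ε)
    (F : EuclideanSpace ℝ (Fin n) → ℝ)
    (hF : ∀ x, F x = f x + (Ry ^ 2 / ε) * ‖A x‖ ^ 2)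
    (xN : EuclideanSpace ℝ (Fin n)) (hxNQ : xN ∈ Q)
    (hxNopt : F xN - sInf (F '' Q) ≤ ε) :
    f xN - f xstar ≤ ε ∧ ‖A xN‖ ≤ 2 * ε / Ry := by
  have hFxstar : F xstar = f xstar := by
    rw [hF, hxstarFeas]; simp
  have hlow : ∀ x ∈ Q, f xstar - Ry * ‖A x‖ ≤ f x := by
    intro x hx
    have h1 := hystarDual x hx
    have h2 : |⟪ystar, A x⟫| ≤ ‖ystar‖ * ‖A x‖ := abs_real_inner_le_norm _ _
    have h3 := neg_abs_le ⟪ystar, A x⟫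
    nlinarith [norm_nonneg (A x)]
  have hbdd : BddBelow (F '' Q) := by
    refine ⟨f xstar - ε / 4, ?_⟩
    rintro z ⟨x, hx, rfl⟩
    have hl := hlow x hx
    rw [hF]
    have ht : 0 ≤ ‖A x‖ := norm_nonneg _
    have hq : 0 ≤ (Ry * ‖A x‖ - ε / 2) ^ 2 := sq_nonneg _
    have key : Ry * ‖A x‖ - ε / 4 ≤ (Ry ^ 2 / ε) * ‖A x‖ ^ 2 := by
      rw [div_mul_eq_mul_div, le_div_iff₀ hε]
      nlinarith
    linarith
  have hsinf : sInf (F '' Q) ≤ f xstar := by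
    rw [← hFxstar]; exact csInf_le hbdd ⟨xstar, hxstarQ, rfl⟩
  have hFN : F xN ≤ f xstar + ε := by linarith
  have htN : 0 ≤ ‖A xN‖ := norm_nonneg _
  have hpen : 0 ≤ (Ry ^ 2 / ε) * ‖A xN‖ ^ 2 := by positivity
  have hFNeq : F xN = f xN + (Ry ^ 2 / ε) * ‖A xN‖ ^ 2 := hF xN
  have hlowN := hlow xN hxNQ
  constructor
  · linarith
  · by_contra h
    push_neg at h
    have hquad : (Ry ^ 2 / ε) * ‖A xN‖ ^ 2 ≤ Ry * ‖A xN‖ + ε := by linarith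
    rw [div_mul_eq_mul_div, div_le_iff₀ hε] at hquad
    have h2 : 2 * ε < ‖A xN‖ * Ry := (div_lt_iff₀ hRy).mp h
    nlinarith [mul_pos hRy hRy, sq_nonneg (Ry * ‖A xN‖ - 2 * ε)]
end

section
/- Let f : ℝⁿ → ℝ, let A : ℝⁿ → ℝᵐ be linear, define ψ(y) = sup_{x∈ℝⁿ}(⟨y, Ax⟩ − f(x)), and let ε > 0 and R_y > 0. Let y^N ∈ ℝᵐ satisfy ‖y^N‖₂ ≤ 2R_y, suppose the supremum defining ψ(y^N) is attained at x^N ∈ ℝⁿ, and assume ‖A x^N‖₂ ≤ ε/R_y. Then for every x* ∈ ℝⁿ with A x* = 0 (in particular for every minimizer of f over {x : Ax = 0}), f(x^N) − f(x*) ≤ 2ε, and ‖A x^N‖₂ ≤ ε/R_y. -/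
open scoped RealInnerProductSpace

/-- Theorem 5.2: if the dual point `y^N` satisfies `‖y^N‖ ≤ 2 R_y` and the dual gradient
`A x^N` (where `x^N` attains the supremum defining `ψ(y^N)`) satisfies `‖A x^N‖ ≤ ε/R_y`,
then `f(x^N) - f(x*) ≤ 2ε` for any minimizer `x*` of `f` over `{x : Ax = 0}`, and
`‖A x^N‖ ≤ ε/R_y`. -/
theorem small_dual_gradient_norm_primal_guarantee {n m : ℕ}
    (f : EuclideanSpace ℝ (Fin n) → ℝ)
    (A : EuclideanSpace ℝ (Fin n) →ₗ[ℝ] EuclideanSpace ℝ (Fin m))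
    (ε Ry : ℝ) (hε : 0 < ε) (hRy : 0 < Ry)
    (yN : EuclideanSpace ℝ (Fin m))
    (hyN : ‖yN‖ ≤ 2 * Ry)
    (xN : EuclideanSpace ℝ (Fin n))
    (hattain : ∀ x, ⟪yN, A x⟫ - f x ≤ ⟪yN, A xN⟫ - f xN)
    (hgrad : ‖A xN‖ ≤ ε / Ry) :
    (∀ xstar : EuclideanSpace ℝ (Fin n), A xstar = 0 →
      f xN - f xstar ≤ 2 * ε) ∧ ‖A xN‖ ≤ ε / Ry := by
  refine ⟨fun xstar hx => ?_, hgrad⟩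
  have h1 := hattain xstar
  rw [hx, inner_zero_right] at h1
  have h2 : f xN - f xstar ≤ ⟪yN, A xN⟫ := by linarith
  have h3 : ⟪yN, A xN⟫ ≤ ‖yN‖ * ‖A xN‖ := real_inner_le_norm _ _
  have h4 : ‖yN‖ * ‖A xN‖ ≤ (2 * Ry) * (ε / Ry) :=
    mul_le_mul hyN hgrad (norm_nonneg _) (by positivity)
  have : (2 * Ry) * (ε / Ry) = 2 * ε := by field_simp
  linarith
end

section
/- Let N ≥ 1 be an integer, C ∈ (0, 1/4), and let r_0, r_1, …, r_N be nonnegative reals such that for every l = 1, …, N: r_l² ≤ r_0² + (2C/(N+1)^{3/2})·Σ_{k=0}^{l−1}(k+2)^{1/2}·r_{k+1}². Then r_l ≤ 2·r_0 for all l = 0, …, N. -/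
open Finset in
/-- Lemma D.4 (recurrence lemma, inexact proximal case): if `C ∈ (0, 1/4)` and nonnegative
reals `r₀,…,r_N` satisfy
`r_l² ≤ r₀² + (2C/(N+1)^{3/2})·Σ_{k<l}(k+2)^{1/2} r_{k+1}²` for `l = 1,…,N`,
then `r_l ≤ 2 r₀` for all `l ≤ N`. -/
theorem recurrence_lemma_inexact_case (N : ℕ) (hN : 1 ≤ N)
    (C : ℝ) (hC0 : 0 < C) (hC : C < 1 / 4)
    (r : ℕ → ℝ) (hr : ∀ k, k ≤ N → 0 ≤ r k)
    (hrec : ∀ l, 1 ≤ l → l ≤ N →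
      (r l) ^ 2 ≤ (r 0) ^ 2
        + (2 * C / (((N : ℝ) + 1) ^ ((3 : ℝ) / 2)))
            * ∑ k ∈ range l, Real.sqrt ((k : ℝ) + 2) * (r (k + 1)) ^ 2) :
    ∀ l, l ≤ N → r l ≤ 2 * r 0 := by
  have hNpos : (0:ℝ) < (N:ℝ) + 1 := by positivity
  have hN2 : (2:ℝ) ≤ (N:ℝ) + 1 := by
    have : (1:ℝ) ≤ (N:ℝ) := by exact_mod_cast hN
    linarith
  have hs : 0 < Real.sqrt ((N:ℝ) + 1) := Real.sqrt_pos.mpr hNpos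
  have hpow : ((N:ℝ) + 1) ^ ((3:ℝ)/2) = ((N:ℝ) + 1) * Real.sqrt ((N:ℝ) + 1) := by
    rw [show (3:ℝ)/2 = 1 + 1/2 by norm_num, Real.rpow_add hNpos, Real.rpow_one,
      ← Real.sqrt_eq_rpow]
  set A : ℝ := 2 * C / (((N : ℝ) + 1) ^ ((3 : ℝ) / 2)) with hAdef
  have hApos : 0 < A := by
    apply div_pos (by linarith) (by rw [hpow]; positivity)
  have key : ∀ l, l ≤ N → r l ^ 2 ≤ 4 * r 0 ^ 2 := by
    intro l
    induction l using Nat.strong_induction_on with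
    | _ l ih =>
      cases l with
      | zero => intro _; nlinarith [sq_nonneg (r 0)]
      | succ m =>
        intro hlN
        have hrm := hrec (m + 1) (Nat.le_add_left 1 m) hlN
        rw [Finset.sum_range_succ] at hrm
        -- bound the inner sum
        have hsum1 : ∑ k ∈ range m, Real.sqrt ((k : ℝ) + 2) * (r (k + 1)) ^ 2
            ≤ ∑ k ∈ range m, Real.sqrt ((k : ℝ) + 2) * (4 * r 0 ^ 2) := by
          apply Finset.sum_le_sum
          intro k hk
          have hk' : k < m := Finset.mem_range.mp hk
          exact mul_le_mul_of_nonneg_left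
            (ih (k + 1) (by omega) (by omega)) (Real.sqrt_nonneg _)
        have hsum2 : ∑ k ∈ range m, Real.sqrt ((k : ℝ) + 2)
            ≤ (m : ℝ) * Real.sqrt ((N:ℝ) + 1) := by
          calc ∑ k ∈ range m, Real.sqrt ((k : ℝ) + 2)
              ≤ ∑ _k ∈ range m, Real.sqrt ((N:ℝ) + 1) := by
                apply Finset.sum_le_sum
                intro k hk
                apply Real.sqrt_le_sqrt
                have hk' : k < m := Finset.mem_range.mp hk
                have : (k:ℝ) + 1 ≤ (m:ℝ) := by exact_mod_cast hk'
                have hm : (m:ℝ) + 1 ≤ (N:ℝ) := by exact_mod_cast hlN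
                linarith
            _ = (m : ℝ) * Real.sqrt ((N:ℝ) + 1) := by
                rw [Finset.sum_const, card_range, nsmul_eq_mul]
        have hAsum : A * ∑ k ∈ range m, Real.sqrt ((k : ℝ) + 2) ≤ 2 * C := by
          have hmN : (m:ℝ) ≤ (N:ℝ) + 1 := by
            have : (m:ℝ) ≤ (N:ℝ) := by exact_mod_cast (by omega : m ≤ N)
            linarith
          have h1 : ∑ k ∈ range m, Real.sqrt ((k : ℝ) + 2)
              ≤ ((N:ℝ) + 1) * Real.sqrt ((N:ℝ) + 1) := by
            calc ∑ k ∈ range m, Real.sqrt ((k : ℝ) + 2)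
                ≤ (m : ℝ) * Real.sqrt ((N:ℝ) + 1) := hsum2
              _ ≤ ((N:ℝ) + 1) * Real.sqrt ((N:ℝ) + 1) :=
                  mul_le_mul_of_nonneg_right hmN hs.le
          have hsumnn : 0 ≤ ∑ k ∈ range m, Real.sqrt ((k : ℝ) + 2) :=
            Finset.sum_nonneg fun k _ => Real.sqrt_nonneg _
          calc A * ∑ k ∈ range m, Real.sqrt ((k : ℝ) + 2)
              ≤ A * (((N:ℝ) + 1) * Real.sqrt ((N:ℝ) + 1)) :=
                mul_le_mul_of_nonneg_left h1 hApos.le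
            _ = 2 * C := by
                rw [hAdef, hpow]
                field_simp
        have hAm : A * Real.sqrt ((m:ℝ) + 2) ≤ C := by
          have h1 : Real.sqrt ((m:ℝ) + 2) ≤ Real.sqrt ((N:ℝ) + 1) := by
            apply Real.sqrt_le_sqrt
            have hm : (m:ℝ) + 1 ≤ (N:ℝ) := by exact_mod_cast hlN
            linarith
          have h2 : A * Real.sqrt ((m:ℝ) + 2) ≤ A * Real.sqrt ((N:ℝ) + 1) :=
            mul_le_mul_of_nonneg_left h1 hApos.le
          have h3 : A * Real.sqrt ((N:ℝ) + 1) = 2 * C / ((N:ℝ) + 1) := by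
            rw [hAdef, hpow]
            field_simp
          have h4 : 2 * C / ((N:ℝ) + 1) ≤ C := by
            rw [div_le_iff₀ hNpos]
            nlinarith
          linarith
        -- assemble
        have hr0 : (0:ℝ) ≤ r 0 ^ 2 := sq_nonneg _
        have hrm2 : (0:ℝ) ≤ r (m+1) ^ 2 := sq_nonneg _
        have hA1 : A * (∑ k ∈ range m, Real.sqrt ((k : ℝ) + 2) * (r (k + 1)) ^ 2)
            ≤ 2 * C * (4 * r 0 ^ 2) := by
          calc A * (∑ k ∈ range m, Real.sqrt ((k : ℝ) + 2) * (r (k + 1)) ^ 2)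
              ≤ A * (∑ k ∈ range m, Real.sqrt ((k : ℝ) + 2) * (4 * r 0 ^ 2)) :=
                mul_le_mul_of_nonneg_left hsum1 hApos.le
            _ = (A * ∑ k ∈ range m, Real.sqrt ((k : ℝ) + 2)) * (4 * r 0 ^ 2) := by
                rw [← Finset.sum_mul]; ring
            _ ≤ 2 * C * (4 * r 0 ^ 2) := by
                apply mul_le_mul_of_nonneg_right hAsum (by positivity)
        have hA2 : A * (Real.sqrt ((m:ℝ) + 2) * r (m+1) ^ 2) ≤ C * r (m+1) ^ 2 := by
          have := mul_le_mul_of_nonneg_right hAm hrm2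
          calc A * (Real.sqrt ((m:ℝ) + 2) * r (m+1) ^ 2)
              = (A * Real.sqrt ((m:ℝ) + 2)) * r (m+1) ^ 2 := by ring
            _ ≤ C * r (m+1) ^ 2 := this
        have h1 : r (m+1) ^ 2 ≤ r 0 ^ 2 + 2 * C * (4 * r 0 ^ 2) + C * r (m+1) ^ 2 := by
          have := hrm
          have hdist : A * (∑ k ∈ range m, Real.sqrt ((k : ℝ) + 2) * (r (k + 1)) ^ 2
              + Real.sqrt ((m:ℝ) + 2) * r (m+1) ^ 2)
              = A * (∑ k ∈ range m, Real.sqrt ((k : ℝ) + 2) * (r (k + 1)) ^ 2)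
              + A * (Real.sqrt ((m:ℝ) + 2) * r (m+1) ^ 2) := by ring
          push_cast at this ⊢
          nlinarith [hA1, hA2]
        nlinarith [mul_nonneg (by linarith : (0:ℝ) ≤ 1/4 - C) hrm2,
          mul_nonneg (by linarith : (0:ℝ) ≤ 1/4 - C) hr0]
  intro l hl
  have h := key l hl
  nlinarith [hr l hl, hr 0 (Nat.zero_le N)]
end

section
/- Let N ≥ 1 be an integer, let 𝒜, B ≥ 0 and D ≥ 1, and let r_0, …, r_N, r̃_0, …, r̃_N, α_0, …, α_N be nonnegative reals with r̃_0 = 0, A_0 = α_0 > 0, A_l = A_{l−1} + α_l and α_l ≤ D·A_{l−1} for l = 1, …, N. Suppose that for every l = 1, …, N: A_l·r_l² + Σ_{k=0}^{l−1} A_k·r̃_k² ≤ 𝒜·r_0² + (B·r_0/(N·√A_N))·Σ_{k=0}^{l−1} α_{k+1}·(r_k + r̃_k). Set C = max{√A_0, (3BD + √(9B²D² + 4𝒜))/2}. Then r_l ≤ C·r_0/√A_l and r̃_{l−1} ≤ C·r_0/√A_{l−1} for all l = 1, …, N, and r_0 ≤ C·r_0/√A_0. -/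
private lemma quad_aux (x y b c M : ℝ) (hx : 0 ≤ x) (hy : 0 ≤ y) (hM : 0 ≤ M)
    (hb0 : 0 ≤ b) (hb : b ≤ M) (h : y ^ 2 + x ^ 2 ≤ c + b * x)
    (hM2 : b * M + c ≤ M ^ 2) :
    x ≤ M ∧ y ≤ M := by
  have hxM : x ≤ M := by
    by_contra hcon
    push_neg at hcon
    nlinarith [sq_nonneg y, mul_nonneg hx hM, mul_pos (sub_pos.2 hcon) (lt_of_le_of_lt hM hcon)]
  refine ⟨hxM, ?_⟩
  by_contra hcon
  push_neg at hcon
  nlinarith [sq_nonneg x, mul_nonneg hb0 (sub_nonneg.2 hxM),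
    mul_pos (sub_pos.2 hcon) (lt_of_le_of_lt hM hcon)]

set_option maxHeartbeats 1600000 in
open Finset in
/-- Lemma D.5 (recurrence lemma, strongly convex case): with `A_l = A_{l-1} + α_l`,
`α_l ≤ D·A_{l-1}`, `r̃₀ = 0`, and the recurrence
`A_l r_l² + Σ_{k<l} A_k r̃_k² ≤ 𝒜 r₀² + (B r₀/(N√A_N))·Σ_{k<l} α_{k+1}(r_k + r̃_k)`,
one has `r_l ≤ C r₀/√A_l`, `r̃_{l-1} ≤ C r₀/√A_{l-1}` for `l = 1,…,N` and
`r₀ ≤ C r₀/√A_0`, where `C = max{√A₀, (3BD + √(9B²D² + 4𝒜))/2}`. -/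
theorem recurrence_lemma_strongly_convex_case (N : ℕ) (hN : 1 ≤ N)
    (Ac B D : ℝ) (hAc : 0 ≤ Ac) (hB : 0 ≤ B) (hD : 1 ≤ D)
    (r rt α A : ℕ → ℝ)
    (hr : ∀ l, l ≤ N → 0 ≤ r l) (hrt : ∀ l, l ≤ N → 0 ≤ rt l)
    (hα : ∀ l, l ≤ N → 0 ≤ α l)
    (hrt0 : rt 0 = 0)
    (hA0 : A 0 = α 0) (hα0 : 0 < α 0)
    (hArec : ∀ l, 1 ≤ l → l ≤ N → A l = A (l - 1) + α l)
    (hαD : ∀ l, 1 ≤ l → l ≤ N → α l ≤ D * A (l - 1))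
    (hrec : ∀ l, 1 ≤ l → l ≤ N →
      A l * (r l) ^ 2 + ∑ k ∈ range l, A k * (rt k) ^ 2 ≤
        Ac * (r 0) ^ 2
          + (B * r 0 / ((N : ℝ) * Real.sqrt (A N)))
              * ∑ k ∈ range l, α (k + 1) * (r k + rt k)) :
    ∀ C : ℝ,
      C = max (Real.sqrt (A 0)) ((3 * B * D + Real.sqrt (9 * B ^ 2 * D ^ 2 + 4 * Ac)) / 2) →
      (∀ l, 1 ≤ l → l ≤ N →
        r l ≤ C * r 0 / Real.sqrt (A l) ∧ rt (l - 1) ≤ C * r 0 / Real.sqrt (A (l - 1))) ∧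
      r 0 ≤ C * r 0 / Real.sqrt (A 0) := by
  intro C hC
  have hD0 : (0:ℝ) ≤ D := le_trans zero_le_one hD
  have hNR : (1:ℝ) ≤ (N:ℝ) := by exact_mod_cast hN
  have hNpos : (0:ℝ) < (N:ℝ) := lt_of_lt_of_le zero_lt_one hNR
  -- positivity of A
  have hApos : ∀ l, l ≤ N → 0 < A l := by
    intro l
    induction l with
    | zero => intro _; rw [hA0]; exact hα0
    | succ n ih =>
      intro hl
      have hn : n ≤ N := Nat.le_of_succ_le hl
      have h1 : A (n + 1) = A n + α (n + 1) := by
        have := hArec (n + 1) (Nat.le_add_left 1 n) hl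
        simpa using this
      have := hα (n + 1) hl
      have := ih hn
      linarith
  -- monotonicity of A
  have hAstep : ∀ l, 1 ≤ l → l ≤ N → A (l - 1) ≤ A l := by
    intro l hl1 hlN
    have := hArec l hl1 hlN
    have := hα l hlN
    linarith
  have hAmono' : ∀ d k, k + d ≤ N → A k ≤ A (k + d) := by
    intro d
    induction d with
    | zero => intro k _; simp
    | succ n ih =>
      intro k h
      have h1 : k + n ≤ N := by omega
      have h2 := hAstep (k + n + 1) (by omega) (by omega)
      simp only [Nat.add_sub_cancel] at h2
      have h3 : A k ≤ A (k + n) := ih k h1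
      have : A k ≤ A (k + n + 1) := le_trans h3 h2
      simpa [← Nat.add_assoc] using this
  have hAmono : ∀ k, k ≤ N → A k ≤ A N := by
    intro k hk
    have := hAmono' (N - k) k (by omega)
    rwa [Nat.add_sub_cancel' hk] at this
  -- sqrt facts
  have hsApos : ∀ k, k ≤ N → 0 < Real.sqrt (A k) := fun k hk => Real.sqrt_pos.2 (hApos k hk)
  have hsAmono : ∀ k, k ≤ N → Real.sqrt (A k) ≤ Real.sqrt (A N) :=
    fun k hk => Real.sqrt_le_sqrt (hAmono k hk)
  have hr0 : 0 ≤ r 0 := hr 0 (Nat.zero_le N)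
  -- facts about C
  set s := Real.sqrt (9 * B ^ 2 * D ^ 2 + 4 * Ac) with hs_def
  have hs0 : 0 ≤ s := Real.sqrt_nonneg _
  have hs2 : s ^ 2 = 9 * B ^ 2 * D ^ 2 + 4 * Ac := Real.sq_sqrt (by positivity)
  have hCge : (3 * B * D + s) / 2 ≤ C := hC ▸ le_max_right _ _
  have hCA0 : Real.sqrt (A 0) ≤ C := hC ▸ le_max_left _ _
  have hC0 : 0 < C := lt_of_lt_of_le (hsApos 0 (Nat.zero_le N)) hCA0
  have hBDC : B * D ≤ C := by nlinarith [mul_nonneg hB hD0]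
  have hCquad : 3 * B * D * C + Ac ≤ C ^ 2 := by
    nlinarith [sq_nonneg (2 * C - 3 * B * D - s), mul_nonneg hB hD0]
  -- the key induction
  have key : ∀ l, 1 ≤ l → l ≤ N →
      Real.sqrt (A l) * r l ≤ C * r 0 ∧ Real.sqrt (A (l - 1)) * rt (l - 1) ≤ C * r 0 := by
    intro l
    induction l using Nat.strong_induction_on with
    | _ l ih =>
    intro hl1 hlN
    -- bounds from earlier steps
    have hrk : ∀ k, k < l → Real.sqrt (A k) * r k ≤ C * r 0 := by
      intro k hk
      rcases Nat.eq_zero_or_pos k with rfl | hk1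
      · exact mul_le_mul_of_nonneg_right hCA0 hr0
      · exact (ih k hk hk1 (le_trans (le_of_lt hk) hlN)).1
    have hrtk : ∀ k, k < l - 1 → Real.sqrt (A k) * rt k ≤ C * r 0 := by
      intro k hk
      rcases Nat.eq_zero_or_pos k with rfl | hk1
      · rw [hrt0, mul_zero]
        positivity
      · have hk' : k + 1 < l := by omega
        have := (ih (k + 1) hk' (Nat.le_add_left 1 k) (le_trans (le_of_lt hk') hlN)).2
        simpa using this
    set x := Real.sqrt (A (l - 1)) * rt (l - 1) with hx_def
    set y := Real.sqrt (A l) * r l with hy_def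
    have hl1N : l - 1 ≤ N := le_trans (Nat.sub_le l 1) hlN
    have hx0 : 0 ≤ x := mul_nonneg (Real.sqrt_nonneg _) (hrt (l - 1) hl1N)
    have hy0 : 0 ≤ y := mul_nonneg (Real.sqrt_nonneg _) (hr l hlN)
    -- bound the sum
    have hterm : ∀ k, k < l - 1 →
        α (k + 1) * (r k + rt k) ≤ 2 * C * D * r 0 * Real.sqrt (A N) := by
      intro k hk
      have hkN : k + 1 ≤ N := by omega
      have hk0 : k ≤ N := by omega
      have hαk : α (k + 1) ≤ D * A k := by
        have := hαD (k + 1) (Nat.le_add_left 1 k) hkN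
        simpa using this
      have hAk : A k = Real.sqrt (A k) * Real.sqrt (A k) :=
        (Real.mul_self_sqrt (le_of_lt (hApos k hk0))).symm
      have h1 : Real.sqrt (A k) * r k ≤ C * r 0 := hrk k (by omega)
      have h2 : Real.sqrt (A k) * rt k ≤ C * r 0 := hrtk k hk
      have hsk : 0 ≤ Real.sqrt (A k) := Real.sqrt_nonneg _
      have hskN : Real.sqrt (A k) ≤ Real.sqrt (A N) := hsAmono k hk0
      calc α (k + 1) * (r k + rt k)
          ≤ (D * A k) * (r k + rt k) :=
            mul_le_mul_of_nonneg_right hαk (add_nonneg (hr k hk0) (hrt k hk0))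
        _ = D * (Real.sqrt (A k) * r k + Real.sqrt (A k) * rt k) * Real.sqrt (A k) := by
            linear_combination (D * (r k + rt k)) * hAk
        _ ≤ D * (C * r 0 + C * r 0) * Real.sqrt (A N) := by
            apply mul_le_mul (by nlinarith) hskN hsk (by positivity)
        _ = 2 * C * D * r 0 * Real.sqrt (A N) := by ring
    have hlast : α l * (r (l - 1) + rt (l - 1)) ≤
        C * D * r 0 * Real.sqrt (A N) + D * Real.sqrt (A N) * x := by
      have hαl : α l ≤ D * A (l - 1) := hαD l hl1 hlN
      have hAl1 : A (l - 1) = Real.sqrt (A (l - 1)) * Real.sqrt (A (l - 1)) :=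
        (Real.mul_self_sqrt (le_of_lt (hApos (l - 1) hl1N))).symm
      have h1 : Real.sqrt (A (l - 1)) * r (l - 1) ≤ C * r 0 := hrk (l - 1) (by omega)
      have hsk : 0 ≤ Real.sqrt (A (l - 1)) := Real.sqrt_nonneg _
      have hskN : Real.sqrt (A (l - 1)) ≤ Real.sqrt (A N) := hsAmono (l - 1) hl1N
      have hsN : 0 ≤ Real.sqrt (A N) := Real.sqrt_nonneg _
      calc α l * (r (l - 1) + rt (l - 1))
          ≤ (D * A (l - 1)) * (r (l - 1) + rt (l - 1)) :=
            mul_le_mul_of_nonneg_right hαl (add_nonneg (hr _ hl1N) (hrt _ hl1N))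
        _ = D * (Real.sqrt (A (l - 1)) * r (l - 1)) * Real.sqrt (A (l - 1))
              + D * Real.sqrt (A (l - 1)) * x := by
            linear_combination (D * (r (l - 1) + rt (l - 1))) * hAl1
              + D * Real.sqrt (A (l - 1)) * hx_def
        _ ≤ D * (C * r 0) * Real.sqrt (A N) + D * Real.sqrt (A N) * x := by
            have e1 : D * (Real.sqrt (A (l - 1)) * r (l - 1)) * Real.sqrt (A (l - 1))
                ≤ D * (C * r 0) * Real.sqrt (A N) := by
              apply mul_le_mul (mul_le_mul_of_nonneg_left h1 hD0) hskN hsk (by positivity)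
            have e2 : D * Real.sqrt (A (l - 1)) * x ≤ D * Real.sqrt (A N) * x :=
              mul_le_mul_of_nonneg_right (mul_le_mul_of_nonneg_left hskN hD0) hx0
            linarith
        _ = C * D * r 0 * Real.sqrt (A N) + D * Real.sqrt (A N) * x := by ring
    have hSsum : ∑ k ∈ range l, α (k + 1) * (r k + rt k) ≤
        (2 * (l:ℝ) - 1) * (C * D * r 0 * Real.sqrt (A N)) + D * Real.sqrt (A N) * x := by
      have hl' : l = (l - 1) + 1 := (Nat.succ_pred_eq_of_pos hl1).symm
      rw [hl', sum_range_succ, ← hl']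
      have hpart := Finset.sum_le_card_nsmul (range (l - 1))
        (fun k => α (k + 1) * (r k + rt k)) (2 * C * D * r 0 * Real.sqrt (A N))
        (fun k hk => hterm k (mem_range.mp hk))
      simp only [Finset.card_range, nsmul_eq_mul] at hpart
      have hcast : ((l - 1 : ℕ) : ℝ) = (l : ℝ) - 1 := by
        have : (1:ℕ) ≤ l := hl1
        push_cast [Nat.cast_sub this]
        ring
      rw [hcast] at hpart
      have hid : ((l:ℝ) - 1) * (2 * C * D * r 0 * Real.sqrt (A N))
          + (C * D * r 0 * Real.sqrt (A N) + D * Real.sqrt (A N) * x)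
          = (2 * (l:ℝ) - 1) * (C * D * r 0 * Real.sqrt (A N)) + D * Real.sqrt (A N) * x := by
        ring
      linarith [hpart, hlast]
    -- multiply by the coefficient
    have hsN0 : 0 < Real.sqrt (A N) := hsApos N le_rfl
    have hcoef : 0 ≤ B * r 0 / ((N:ℝ) * Real.sqrt (A N)) := by positivity
    have hS2 : (2 * (l:ℝ) - 1) * (C * D * r 0 * Real.sqrt (A N)) + D * Real.sqrt (A N) * x ≤
        2 * (N:ℝ) * (C * D * r 0 * Real.sqrt (A N)) + D * Real.sqrt (A N) * x := by
      have hlN' : (l:ℝ) ≤ (N:ℝ) := by exact_mod_cast hlN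
      have hK : (0:ℝ) ≤ C * D * r 0 * Real.sqrt (A N) := by positivity
      have h2 : (2 * (l:ℝ) - 1) ≤ 2 * (N:ℝ) := by linarith
      have h3 := mul_le_mul_of_nonneg_right h2 hK
      linarith [h3]
    have hmul : (B * r 0 / ((N:ℝ) * Real.sqrt (A N))) *
        (2 * (N:ℝ) * (C * D * r 0 * Real.sqrt (A N)) + D * Real.sqrt (A N) * x) =
        2 * B * C * D * r 0 ^ 2 + (B * D * r 0 / (N:ℝ)) * x := by
      field_simp
    have hrhs : (B * r 0 / ((N:ℝ) * Real.sqrt (A N))) *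
        ∑ k ∈ range l, α (k + 1) * (r k + rt k) ≤
        2 * B * C * D * r 0 ^ 2 + (B * D * r 0 / (N:ℝ)) * x := by
      calc (B * r 0 / ((N:ℝ) * Real.sqrt (A N))) * ∑ k ∈ range l, α (k + 1) * (r k + rt k)
          ≤ (B * r 0 / ((N:ℝ) * Real.sqrt (A N))) *
            (2 * (N:ℝ) * (C * D * r 0 * Real.sqrt (A N)) + D * Real.sqrt (A N) * x) :=
            mul_le_mul_of_nonneg_left (le_trans hSsum hS2) hcoef
        _ = 2 * B * C * D * r 0 ^ 2 + (B * D * r 0 / (N:ℝ)) * x := hmul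
    -- lower bound of LHS
    have hy2 : y ^ 2 = A l * r l ^ 2 := by
      rw [hy_def, mul_pow, Real.sq_sqrt (le_of_lt (hApos l hlN))]
    have hx2 : x ^ 2 = A (l - 1) * rt (l - 1) ^ 2 := by
      rw [hx_def, mul_pow, Real.sq_sqrt (le_of_lt (hApos (l - 1) hl1N))]
    have hxsum : A (l - 1) * rt (l - 1) ^ 2 ≤ ∑ k ∈ range l, A k * rt k ^ 2 := by
      apply Finset.single_le_sum (f := fun k => A k * rt k ^ 2)
      · intro k hk
        have : k ≤ N := le_trans (le_of_lt (mem_range.mp hk)) hlN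
        exact mul_nonneg (le_of_lt (hApos k this)) (sq_nonneg _)
      · exact mem_range.mpr (by omega)
    have hmain : y ^ 2 + x ^ 2 ≤
        (Ac + 2 * B * C * D) * r 0 ^ 2 + (B * D * r 0 / (N:ℝ)) * x := by
      have := hrec l hl1 hlN
      rw [hy2, hx2]
      linarith [hxsum, hrhs, this]
    -- apply the quadratic lemma
    have hb1 : B * D * r 0 / (N:ℝ) ≤ C * r 0 := by
      have h1 : B * D * r 0 / (N:ℝ) ≤ B * D * r 0 :=
        div_le_self (by positivity) hNR
      have h2 : B * D * r 0 ≤ C * r 0 := mul_le_mul_of_nonneg_right hBDC hr0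
      linarith
    have hM2 : (B * D * r 0 / (N:ℝ)) * (C * r 0) + (Ac + 2 * B * C * D) * r 0 ^ 2 ≤
        (C * r 0) ^ 2 := by
      have h1 : (B * D * r 0 / (N:ℝ)) * (C * r 0) ≤ (B * D * r 0) * (C * r 0) := by
        apply mul_le_mul_of_nonneg_right _ (by positivity)
        exact div_le_self (by positivity) hNR
      nlinarith [sq_nonneg (r 0), hCquad, mul_nonneg hB hD0]
    have := quad_aux x y (B * D * r 0 / (N:ℝ)) ((Ac + 2 * B * C * D) * r 0 ^ 2) (C * r 0)
      hx0 hy0 (by positivity) (by positivity) hb1 hmain hM2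
    exact ⟨this.2, this.1⟩
  -- conclude
  constructor
  · intro l hl1 hlN
    have hk := key l hl1 hlN
    have h1 : 0 < Real.sqrt (A l) := hsApos l hlN
    have h2 : 0 < Real.sqrt (A (l - 1)) := hsApos (l - 1) (le_trans (Nat.sub_le l 1) hlN)
    constructor
    · rw [le_div_iff₀ h1]; linarith [hk.1, mul_comm (r l) (Real.sqrt (A l))]
    · rw [le_div_iff₀ h2]
      have := hk.2
      linarith [mul_comm (rt (l - 1)) (Real.sqrt (A (l - 1)))]
  · have h1 : 0 < Real.sqrt (A 0) := hsApos 0 (Nat.zero_le N)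
    rw [le_div_iff₀ h1]
    calc r 0 * Real.sqrt (A 0) ≤ r 0 * C := mul_le_mul_of_nonneg_left hCA0 hr0
      _ = C * r 0 := mul_comm _ _
end

section
/- Let f : ℝⁿ → ℝ be convex and L-smooth, h : ℝⁿ → ℝ convex and L_h-smooth, F = f + h, and let x* be a minimizer of F on ℝⁿ. Let 0 ≤ δ < 1/2 and consider the STM_IPS iterates: α_0 = A_0 = 0; for k ≥ 0, α_{k+1} > 0 solves A_k + α_{k+1} = 2Lα_{k+1}² with A_{k+1} = A_k + α_{k+1}; x̃⁰ = z⁰ = x⁰; x̃^{k+1} = (A_k x^k + α_{k+1} z^k)/A_{k+1}; g_{k+1}(z) = ½‖z^k − z‖₂² + α_{k+1}(f(x̃^{k+1}) + ⟨∇f(x̃^{k+1}), z − x̃^{k+1}⟩ + h(z)); ẑ^{k+1} is the unique minimizer of g_{k+1} over ℝⁿ; z^{k+1} is any point with g_{k+1}(z^{k+1}) − g_{k+1}(ẑ^{k+1}) ≤ δ‖z^k − ẑ^{k+1}‖₂²; x^{k+1} = (A_k x^k + α_{k+1} z^{k+1})/A_{k+1}. Set R_k = ‖x* − z^k‖₂,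 R̃_0 = R_0, R̃_{k+1} = max{R̃_k, R_{k+1}}, and δ̂ = 2√((L_h + 2L)δ/((1 − √(2δ))²·L)). Then for every N ≥ 1: A_N·(F(x^N) − F(x*)) ≤ ½R_0² − ½R_N² + δ̂·Σ_{k=0}^{N−1} √(k+2)·R̃_{k+1}². -/
open Finset
open scoped RealInnerProductSpace

/-!
One step of the similar triangles method gives `A_{k+1} F(x^{k+1}) ≤ A_k F(x^k) + g_k(z^{k+1})`
(descent lemma for `f`, convexity of `f` and `h`, and the coupling `A_{k+1} = 2Lα_{k+1}²`).
As `g_k` is `1`-strongly convex with gradient `G`,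
`g_k(z^{k+1}) ≤ g_k(x*) - ⟪G(z^{k+1}), x* - z^{k+1}⟫ - R_{k+1}²/2`, and
`g_k(x*) ≤ R_k²/2 + α_{k+1} F(x*)`. The only error term is `‖G(z^{k+1})‖ R_{k+1}`.
Since `g_k` is also `(1 + α_{k+1}L_h)`-smooth, `‖G(z^{k+1})‖² ≤ 2(1 + α_{k+1}L_h)δ‖z^k - ẑ^{k+1}‖²`,
while strong convexity gives `‖z^{k+1} - ẑ^{k+1}‖ ≤ √(2δ)‖z^k - ẑ^{k+1}‖`, hence
`(1 - √(2δ))‖z^k - ẑ^{k+1}‖ ≤ ‖z^k - z^{k+1}‖ ≤ 2R̃_{k+1}`. Together with `2Lα_{k+1} ≤ k + 2`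
the error is at most `δ̂ √(k+2) R̃_{k+1}²`, and the one-step inequalities telescope.
-/

section QuadraticModels

variable {E : Type*} [NormedAddCommGroup E] [InnerProductSpace ℝ E]

/- `G` plays the role of a gradient field: for `G = gradient g`, `HasQuadraticLowerModel g G μ`
is `μ`-strong convexity (convexity for `μ = 0`) and `HasQuadraticUpperModel g G M` is the
conclusion of the descent lemma for an `M`-smooth `g`. -/
def HasQuadraticLowerModel (g : E → ℝ) (G : E → E) (μ : ℝ) : Prop :=
  ∀ p q, g p + ⟪G p, q - p⟫ + μ / 2 * ‖q - p‖ ^ 2 ≤ g q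

def HasQuadraticUpperModel (g : E → ℝ) (G : E → E) (M : ℝ) : Prop :=
  ∀ p q, g q ≤ g p + ⟪G p, q - p⟫ + M / 2 * ‖q - p‖ ^ 2

variable {g₁ g₂ : E → ℝ} {G₁ G₂ : E → E} {μ₁ μ₂ : ℝ}

lemma HasQuadraticLowerModel.add (h₁ : HasQuadraticLowerModel g₁ G₁ μ₁)
    (h₂ : HasQuadraticLowerModel g₂ G₂ μ₂) :
    HasQuadraticLowerModel (fun w => g₁ w + g₂ w) (fun w => G₁ w + G₂ w) (μ₁ + μ₂) := by
  intro p q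
  have := h₁ p q
  have := h₂ p q
  rw [inner_add_left]
  linarith

lemma HasQuadraticUpperModel.add (h₁ : HasQuadraticUpperModel g₁ G₁ μ₁)
    (h₂ : HasQuadraticUpperModel g₂ G₂ μ₂) :
    HasQuadraticUpperModel (fun w => g₁ w + g₂ w) (fun w => G₁ w + G₂ w) (μ₁ + μ₂) := by
  intro p q
  have := h₁ p q
  have := h₂ p q
  rw [inner_add_left]
  linarith

lemma HasQuadraticLowerModel.const_mul (h : HasQuadraticLowerModel g₁ G₁ μ₁) {a : ℝ}
    (ha : 0 ≤ a) : HasQuadraticLowerModel (fun w => a * g₁ w) (fun w => a • G₁ w) (a * μ₁) := by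
  intro p q
  have := mul_le_mul_of_nonneg_left (h p q) ha
  rw [real_inner_smul_left]
  linarith

lemma HasQuadraticUpperModel.const_mul (h : HasQuadraticUpperModel g₁ G₁ μ₁) {a : ℝ}
    (ha : 0 ≤ a) : HasQuadraticUpperModel (fun w => a * g₁ w) (fun w => a • G₁ w) (a * μ₁) := by
  intro p q
  have := mul_le_mul_of_nonneg_left (h p q) ha
  rw [real_inner_smul_left]
  linarith

lemma half_sq_norm_sub_eq (c p q : E) :
    1 / 2 * ‖c - q‖ ^ 2 = 1 / 2 * ‖c - p‖ ^ 2 + ⟪p - c, q - p⟫ + 1 / 2 * ‖q - p‖ ^ 2 := by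
  rw [show c - q = (c - p) - (q - p) by abel, norm_sub_sq_real, ← neg_sub c p, inner_neg_left]
  ring

lemma hasQuadraticLowerModel_half_sq_norm_sub (c : E) :
    HasQuadraticLowerModel (fun w => 1 / 2 * ‖c - w‖ ^ 2) (fun w => w - c) 1 := fun p q =>
  (half_sq_norm_sub_eq c p q).ge

lemma hasQuadraticUpperModel_half_sq_norm_sub (c : E) :
    HasQuadraticUpperModel (fun w => 1 / 2 * ‖c - w‖ ^ 2) (fun w => w - c) 1 := fun p q =>
  (half_sq_norm_sub_eq c p q).le

lemma hasQuadraticLowerModel_affine (b : ℝ) (v x₀ : E) :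
    HasQuadraticLowerModel (fun w => b + ⟪v, w - x₀⟫) (fun _ => v) 0 := fun p q => by
  rw [zero_div, zero_mul, add_zero, add_assoc, ← inner_add_right, sub_add_sub_cancel']

lemma hasQuadraticUpperModel_affine (b : ℝ) (v x₀ : E) :
    HasQuadraticUpperModel (fun w => b + ⟪v, w - x₀⟫) (fun _ => v) 0 := fun p q => by
  rw [zero_div, zero_mul, add_zero, add_assoc, ← inner_add_right, sub_add_sub_cancel']

end QuadraticModels

section Gradient

variable {E : Type*} [NormedAddCommGroup E] [InnerProductSpace ℝ E] [CompleteSpace E]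
  {f : E → ℝ} {M : ℝ}

lemma hasDerivAt_comp_add_smul {x v : E} {t : ℝ} (hf : DifferentiableAt ℝ f (x + t • v)) :
    HasDerivAt (fun s : ℝ => f (x + s • v)) ⟪gradient f (x + t • v), v⟫ t := by
  have hline : HasDerivAt (fun s : ℝ => x + s • v) v t := by
    simpa using ((hasDerivAt_id t).smul_const v).const_add x
  have := hf.hasGradientAt.hasFDerivAt.comp_hasDerivAt t hline
  simp only [InnerProductSpace.toDual_apply_apply] at this
  exact this

lemma ConvexOn.hasQuadraticLowerModel_gradient (hc : ConvexOn ℝ Set.univ f)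
    (hf : Differentiable ℝ f) : HasQuadraticLowerModel f (gradient f) 0 := by
  intro x y
  rw [zero_div, zero_mul, add_zero]
  have hline : ConvexOn ℝ Set.univ (fun s : ℝ => f (x + s • (y - x))) := by
    have hcomp : (fun s : ℝ => f (x + s • (y - x))) = f ∘ AffineMap.lineMap x y := by
      ext s
      simp [AffineMap.lineMap_apply_module', add_comm]
    simpa [hcomp] using hc.comp_affineMap (AffineMap.lineMap x y)
  have hderiv := hasDerivAt_comp_add_smul (x := x) (v := y - x) (t := 0) (by simpa using hf x)
  rw [zero_smul, add_zero] at hderiv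
  have hslope := hline.le_slope_of_hasDerivAt (Set.mem_univ 0) (Set.mem_univ 1) one_pos hderiv
  rw [slope_def_field, one_smul, add_sub_cancel, zero_smul, add_zero, sub_zero, div_one]
    at hslope
  linarith

lemma hasQuadraticUpperModel_gradient (hf : Differentiable ℝ f)
    (hsm : ∀ x y, ‖gradient f x - gradient f y‖ ≤ M * ‖x - y‖) :
    HasQuadraticUpperModel f (gradient f) M := by
  intro x y
  set v := y - x
  -- the gap between the quadratic model and `f` along the segment is monotone, because the
  -- Lipschitz bound on the gradient makes its derivative nonnegative
  set w : ℝ → ℝ := fun t => f x + t * ⟪gradient f x, v⟫ + M / 2 * ‖v‖ ^ 2 * t ^ 2 - f (x + t • v)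
  have hw : ∀ t : ℝ, HasDerivAt w
      (⟪gradient f x, v⟫ + M / 2 * ‖v‖ ^ 2 * (2 * t) - ⟪gradient f (x + t • v), v⟫) t := by
    intro t
    have hlin : HasDerivAt (fun s : ℝ => f x + s * ⟪gradient f x, v⟫) ⟪gradient f x, v⟫ t := by
      simpa using ((hasDerivAt_id t).mul_const ⟪gradient f x, v⟫).const_add (f x)
    have hquad : HasDerivAt (fun s : ℝ => M / 2 * ‖v‖ ^ 2 * s ^ 2)
        (M / 2 * ‖v‖ ^ 2 * (2 * t)) t := by
      simpa using (hasDerivAt_pow 2 t).const_mul (M / 2 * ‖v‖ ^ 2)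
    exact (hlin.add hquad).sub (hasDerivAt_comp_add_smul (hf _))
  have hmono : MonotoneOn w (Set.Icc 0 1) := by
    refine monotoneOn_of_deriv_nonneg (convex_Icc 0 1)
      (fun t _ => (hw t).continuousAt.continuousWithinAt)
      (fun t _ => (hw t).differentiableAt.differentiableWithinAt) fun t ht => ?_
    rw [interior_Icc] at ht
    rw [(hw t).deriv]
    have hgrad : ⟪gradient f (x + t • v) - gradient f x, v⟫ ≤ M * (t * ‖v‖) * ‖v‖ := by
      refine (real_inner_le_norm _ _).trans (mul_le_mul_of_nonneg_right ?_ (norm_nonneg v))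
      simpa [norm_smul, abs_of_pos ht.1] using hsm (x + t • v) x
    rw [inner_sub_left] at hgrad
    linarith
  have h01 := hmono (Set.left_mem_Icc.2 zero_le_one) (Set.right_mem_Icc.2 zero_le_one)
    zero_le_one
  simp only [w, v, zero_mul, zero_smul, add_zero, one_mul, one_smul, add_sub_cancel, one_pow,
    mul_one, ne_eq, OfNat.ofNat_ne_zero, not_false_eq_true, zero_pow] at h01
  linarith

end Gradient

section InexactMinimizer

variable {E : Type*} [NormedAddCommGroup E] [InnerProductSpace ℝ E] {g : E → ℝ} {G : E → E}
  {M : ℝ} {m : E}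

lemma le_sqrt_mul_of_sq_le_mul_sq {a b c : ℝ} (ha : 0 ≤ a) (hc : 0 ≤ c)
    (h : a ^ 2 ≤ b * c ^ 2) : a ≤ √b * c := by
  have := Real.sqrt_le_sqrt h
  rwa [Real.sqrt_sq ha, Real.sqrt_mul' _ (sq_nonneg c), Real.sqrt_sq hc] at this

/-- A gradient step of length `M⁻¹` from `p` lowers `g` by at least `‖G p‖² / (2M)`. -/
lemma HasQuadraticUpperModel.sq_norm_le_of_isMin (hg : HasQuadraticUpperModel g G M)
    (hM : 0 < M) (hm : ∀ w, g m ≤ g w) (p : E) : ‖G p‖ ^ 2 ≤ 2 * M * (g p - g m) := by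
  have hstep := hg p (p - M⁻¹ • G p)
  rw [sub_sub_cancel_left, inner_neg_right, real_inner_smul_right, real_inner_self_eq_norm_sq,
    norm_neg, norm_smul, Real.norm_of_nonneg (inv_nonneg.2 hM.le), mul_pow] at hstep
  have hdecr : g m ≤ g p - M⁻¹ / 2 * ‖G p‖ ^ 2 := by
    have hcoef : M / 2 * (M⁻¹ ^ 2 * ‖G p‖ ^ 2) = M⁻¹ / 2 * ‖G p‖ ^ 2 := by
      field_simp
    linarith [hm (p - M⁻¹ • G p)]
  calc ‖G p‖ ^ 2 = 2 * M * (M⁻¹ / 2 * ‖G p‖ ^ 2) := by field_simp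
    _ ≤ 2 * M * (g p - g m) := by gcongr; linarith

lemma one_sub_sqrt_mul_norm_le_of_inexact_min (hlow : HasQuadraticLowerModel g G 1)
    (hup : HasQuadraticUpperModel g G M) (hM : 0 < M) (hm : ∀ w, g m ≤ g w) {δ : ℝ}
    (hδ : δ ≤ 1 / 2) {c p : E} (hp : g p - g m ≤ δ * ‖c - m‖ ^ 2) :
    (1 - √(2 * δ)) * ‖G p‖ ≤ √(2 * M * δ) * ‖c - p‖ := by
  have hGm : G m = 0 := by
    have := hup.sq_norm_le_of_isMin hM hm m
    rw [sub_self, mul_zero] at this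
    exact norm_eq_zero.1 (pow_eq_zero_iff two_ne_zero |>.1 (le_antisymm this (sq_nonneg _)))
  have hpm : ‖p - m‖ ≤ √(2 * δ) * ‖c - m‖ := by
    refine le_sqrt_mul_of_sq_le_mul_sq (norm_nonneg _) (norm_nonneg _) ?_
    have := hlow m p
    rw [hGm, inner_zero_left] at this
    linarith
  have hGp : ‖G p‖ ≤ √(2 * M * δ) * ‖c - m‖ := by
    refine le_sqrt_mul_of_sq_le_mul_sq (norm_nonneg _) (norm_nonneg _) ?_
    have := hup.sq_norm_le_of_isMin hM hm p
    linarith [mul_le_mul_of_nonneg_left hp (by positivity : (0 : ℝ) ≤ 2 * M)]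
  have hcm : (1 - √(2 * δ)) * ‖c - m‖ ≤ ‖c - p‖ := by
    have := norm_sub_le_norm_sub_add_norm_sub c p m
    linarith
  have hsqrt : √(2 * δ) ≤ 1 := Real.sqrt_le_one.2 (by linarith)
  calc (1 - √(2 * δ)) * ‖G p‖ ≤ (1 - √(2 * δ)) * (√(2 * M * δ) * ‖c - m‖) := by gcongr
    _ = √(2 * M * δ) * ((1 - √(2 * δ)) * ‖c - m‖) := by ring
    _ ≤ √(2 * M * δ) * ‖c - p‖ := by gcongr

end InexactMinimizer

section SimilarTriangles

variable {E : Type*} [NormedAddCommGroup E] [InnerProductSpace ℝ E] [CompleteSpace E]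
  {f h : E → ℝ} {L a A' α : ℝ} {x z z' xt x' : E}

lemma similar_triangles_step_le (hfc : ConvexOn ℝ Set.univ f) (hfd : Differentiable ℝ f)
    (hfs : ∀ x y, ‖gradient f x - gradient f y‖ ≤ L * ‖x - y‖) (hhc : ConvexOn ℝ Set.univ h)
    (ha : 0 ≤ a) (hα : 0 < α) (hA : A' = a + α) (hAα : A' = 2 * L * α ^ 2)
    (hxt : xt = A'⁻¹ • (a • x + α • z)) (hx' : x' = A'⁻¹ • (a • x + α • z')) :
    A' * (f x' + h x') ≤ a * (f x + h x)
      + (1 / 2 * ‖z - z'‖ ^ 2 + α * (f xt + ⟪gradient f xt, z' - xt⟫ + h z')) := by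
  have hA'pos : 0 < A' := by linarith
  have hstep : x' - xt = (α / A') • (z' - z) := by
    rw [hx', hxt, ← smul_sub, add_sub_add_left_eq_sub, ← smul_sub, smul_smul, div_eq_inv_mul]
  have hL : L ≠ 0 := by
    rintro rfl
    rw [mul_zero, zero_mul] at hAα
    exact hA'pos.ne' hAα
  -- the coupling `A' = 2 L α²` is what makes the quadratic term of the descent lemma small
  have hdesc : A' * f x' ≤ A' * f xt + α * ⟪gradient f xt, z' - xt⟫ - α * ⟪gradient f xt, z - xt⟫
      + 1 / 4 * ‖z - z'‖ ^ 2 := by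
    have := hasQuadraticUpperModel_gradient hfd hfs xt x'
    rw [hstep, real_inner_smul_right, norm_smul, mul_pow, Real.norm_of_nonneg (by positivity),
      norm_sub_rev z', ← sub_sub_sub_cancel_right z' z xt, inner_sub_right] at this
    calc A' * f x' ≤ A' * (f xt + α / A' * (⟪gradient f xt, z' - xt⟫ - ⟪gradient f xt, z - xt⟫)
          + L / 2 * ((α / A') ^ 2 * ‖z - z'‖ ^ 2)) := by gcongr
      _ = _ := by
        rw [hAα]
        field_simp
        ring
  have hconv := hfc.hasQuadraticLowerModel_gradient hfd xt x
  have hbary : a * ⟪gradient f xt, x - xt⟫ + α * ⟪gradient f xt, z - xt⟫ = 0 := by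
    have hxt' : A' • xt = a • x + α • z := by rw [hxt, smul_inv_smul₀ hA'pos.ne']
    have : a • (x - xt) + α • (z - xt) = 0 := by
      rw [smul_sub, smul_sub, sub_add_sub_comm, ← add_smul, ← hA, hxt', sub_self]
    rw [← real_inner_smul_right, ← real_inner_smul_right, ← inner_add_right, this,
      inner_zero_right]
  have hh : A' * h x' ≤ a * h x + α * h z' := by
    have hcomb : x' = (a / A') • x + (α / A') • z' := by
      rw [hx', smul_add, smul_smul, smul_smul, div_eq_inv_mul, div_eq_inv_mul]
    have := hhc.2 (Set.mem_univ x) (Set.mem_univ z') (div_nonneg ha hA'pos.le)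
      (div_nonneg hα.le hA'pos.le) (by rw [← add_div, ← hA, div_self hA'pos.ne'])
    rw [← hcomb, smul_eq_mul, smul_eq_mul] at this
    calc A' * h x' ≤ A' * (a / A' * h x + α / A' * h z') := by gcongr
      _ = a * h x + α * h z' := by field_simp
  rw [zero_div, zero_mul, add_zero] at hconv
  have hsplit : A' * f xt = a * f xt + α * f xt := by rw [hA, add_mul]
  linarith [mul_le_mul_of_nonneg_left hconv ha, sq_nonneg ‖z - z'‖]

end SimilarTriangles

section InexactProximalStep

variable {E : Type*} [NormedAddCommGroup E] [InnerProductSpace ℝ E] [CompleteSpace E]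
  {f h g : E → ℝ} {L Lh δ a A' α : ℝ} {x z z' zh xt x' : E}

lemma stm_ips_step_le (hfc : ConvexOn ℝ Set.univ f) (hfd : Differentiable ℝ f)
    (hfs : ∀ x y, ‖gradient f x - gradient f y‖ ≤ L * ‖x - y‖) (hhc : ConvexOn ℝ Set.univ h)
    (hhd : Differentiable ℝ h) (hhs : ∀ x y, ‖gradient h x - gradient h y‖ ≤ Lh * ‖x - y‖)
    (hLh : 0 ≤ Lh) (hδ : δ < 1 / 2) (ha : 0 ≤ a) (hα : 0 < α) (hA : A' = a + α)
    (hAα : A' = 2 * L * α ^ 2) (hxt : xt = A'⁻¹ • (a • x + α • z))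
    (hx' : x' = A'⁻¹ • (a • x + α • z'))
    (hg : ∀ w, g w = 1 / 2 * ‖z - w‖ ^ 2 + α * (f xt + ⟪gradient f xt, w - xt⟫ + h w))
    (hzh : ∀ w, g zh ≤ g w) (hz' : g z' - g zh ≤ δ * ‖z - zh‖ ^ 2) (xstar : E) :
    A' * (f x' + h x') + 1 / 2 * ‖xstar - z'‖ ^ 2
      ≤ a * (f x + h x) + α * (f xstar + h xstar) + 1 / 2 * ‖xstar - z‖ ^ 2
        + √(2 * (1 + α * Lh) * δ) / (1 - √(2 * δ)) * ‖z - z'‖ * ‖xstar - z'‖ := by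
  set G : E → E := fun w => (w - z) + α • (gradient f xt + gradient h w)
  have hgfun : g = fun w => 1 / 2 * ‖z - w‖ ^ 2 + α * (f xt + ⟪gradient f xt, w - xt⟫ + h w) :=
    funext hg
  have hlow : HasQuadraticLowerModel g G 1 := by
    have := (hasQuadraticLowerModel_half_sq_norm_sub z).add
      (((hasQuadraticLowerModel_affine (f xt) (gradient f xt) xt).add
        (hhc.hasQuadraticLowerModel_gradient hhd)).const_mul hα.le)
    rw [hgfun]
    convert this using 1
    ring
  have hup : HasQuadraticUpperModel g G (1 + α * Lh) := by
    have := (hasQuadraticUpperModel_half_sq_norm_sub z).add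
      (((hasQuadraticUpperModel_affine (f xt) (gradient f xt) xt).add
        (hasQuadraticUpperModel_gradient hhd hhs)).const_mul hα.le)
    rw [hgfun]
    convert this using 1
    ring
  have hgrad := one_sub_sqrt_mul_norm_le_of_inexact_min hlow hup (by positivity) hzh hδ.le hz'
  have hstm := similar_triangles_step_le hfc hfd hfs hhc ha hα hA hAα hxt hx'
  rw [← hg] at hstm
  have hgx : g xstar ≤ 1 / 2 * ‖xstar - z‖ ^ 2 + α * (f xstar + h xstar) := by
    have := hfc.hasQuadraticLowerModel_gradient hfd xt xstar
    rw [hg, norm_sub_rev]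
    linarith [mul_le_mul_of_nonneg_left this hα.le]
  have hcs := neg_le_of_abs_le (abs_real_inner_le_norm (G z') (xstar - z'))
  have hcpos : 0 < 1 - √(2 * δ) := by
    rw [sub_pos, Real.sqrt_lt' one_pos]
    linarith
  have hGz' : ‖G z'‖ ≤ √(2 * (1 + α * Lh) * δ) / (1 - √(2 * δ)) * ‖z - z'‖ := by
    rw [div_mul_eq_mul_div, le_div_iff₀ hcpos]
    linarith
  linarith [hlow z' xstar, mul_le_mul_of_nonneg_right hGz' (norm_nonneg (xstar - z'))]

end InexactProximalStep

lemma abs_le_add_one_of_sq_sub_le {β m : ℝ} (hm : 0 ≤ m) (h : β ^ 2 - β ≤ m ^ 2) :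
    |β| ≤ m + 1 :=
  abs_le.2 ⟨by nlinarith, by nlinarith⟩

lemma stm_ips_weight_le {L : ℝ} {α A : ℕ → ℝ} (hA0 : A 0 = 0)
    (hαeq : ∀ k, A k + α (k + 1) = 2 * L * α (k + 1) ^ 2)
    (hArec : ∀ k, A (k + 1) = A k + α (k + 1)) (k : ℕ) : 2 * L * α (k + 1) ≤ (k : ℝ) + 2 := by
  have hβ : ∀ k, (2 * L * α (k + 1)) ^ 2 - 2 * L * α (k + 1) = 2 * L * A k := fun k => by
    linear_combination (-2 * L) * hαeq k
  have hA : ∀ k : ℕ, 2 * L * A k ≤ ((k : ℝ) + 1) ^ 2 := by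
    intro k
    induction k with
    | zero => simp [hA0]
    | succ k ih =>
      have hsq : 2 * L * A (k + 1) = (2 * L * α (k + 1)) ^ 2 := by
        rw [hArec]
        linear_combination 2 * L * hαeq k
      have hbound := abs_le.1 <| abs_le_add_one_of_sq_sub_le (by positivity) ((hβ k).trans_le ih)
      rw [hsq, Nat.cast_succ]
      exact sq_le_sq' (by linarith [hbound.1]) (by linarith [hbound.2])
  have := abs_le_add_one_of_sq_sub_le (by positivity) ((hβ k).trans_le (hA k))
  linarith [le_abs_self (2 * L * α (k + 1))]

lemma stm_ips_error_le {L Lh δ α t s r ρ : ℝ} (hL : 0 < L) (hLh : 0 ≤ Lh) (hδ0 : 0 ≤ δ)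
    (hδ : δ < 1 / 2) (hαt : 2 * L * α ≤ t) (ht : 1 ≤ t) (hs : s ≤ 2 * r) (hρ : 0 ≤ ρ)
    (hρr : ρ ≤ r) :
    √(2 * (1 + α * Lh) * δ) / (1 - √(2 * δ)) * s * ρ
      ≤ 2 * √((Lh + 2 * L) * δ / ((1 - √(2 * δ)) ^ 2 * L)) * (√t * r ^ 2) := by
  have hc : 0 < 1 - √(2 * δ) := by
    rw [sub_pos, Real.sqrt_lt' one_pos]
    linarith
  have hconst : √((Lh + 2 * L) * δ / ((1 - √(2 * δ)) ^ 2 * L))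
      = √((Lh + 2 * L) * δ / L) / (1 - √(2 * δ)) := by
    rw [mul_comm ((1 - √(2 * δ)) ^ 2) L, ← div_div, Real.sqrt_div' _ (sq_nonneg _),
      Real.sqrt_sq hc.le]
  have hsqrt : √(2 * (1 + α * Lh) * δ) ≤ √((Lh + 2 * L) * δ / L) * √t := by
    rw [← Real.sqrt_mul' _ (by linarith)]
    refine Real.sqrt_le_sqrt ?_
    rw [div_mul_eq_mul_div, le_div_iff₀ hL]
    linarith [mul_le_mul_of_nonneg_right hαt (mul_nonneg hLh hδ0),
      mul_le_mul_of_nonneg_left ht (mul_nonneg hL.le hδ0)]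
  calc √(2 * (1 + α * Lh) * δ) / (1 - √(2 * δ)) * s * ρ
      ≤ √(2 * (1 + α * Lh) * δ) / (1 - √(2 * δ)) * (2 * r) * r := by
        have hC : 0 ≤ √(2 * (1 + α * Lh) * δ) / (1 - √(2 * δ)) := by positivity
        exact mul_le_mul (mul_le_mul_of_nonneg_left hs hC) hρr hρ (mul_nonneg hC (by linarith))
    _ ≤ √((Lh + 2 * L) * δ / L) * √t / (1 - √(2 * δ)) * (2 * r) * r := by
        have hr : 0 ≤ r := hρ.trans hρr
        gcongr
    _ = _ := by
        rw [hconst]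
        ring

lemma le_runningMax_succ {R Rt : ℕ → ℝ} (hRt0 : Rt 0 = R 0)
    (hRtS : ∀ k, Rt (k + 1) = max (Rt k) (R (k + 1))) (k : ℕ) :
    R k ≤ Rt (k + 1) ∧ R (k + 1) ≤ Rt (k + 1) := by
  refine ⟨?_, by simp [hRtS]⟩
  cases k <;> simp [hRt0, hRtS]

theorem stm_ips_key_inequality_general {n : ℕ}
    (f h : EuclideanSpace ℝ (Fin n) → ℝ) (L Lh : ℝ)
    (hL : 0 < L) (hLh : 0 < Lh)
    (hfconvex : ConvexOn ℝ Set.univ f) (hfdiff : Differentiable ℝ f)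
    (hfsmooth : ∀ x y, ‖gradient f x - gradient f y‖ ≤ L * ‖x - y‖)
    (hhconvex : ConvexOn ℝ Set.univ h) (hhdiff : Differentiable ℝ h)
    (hhsmooth : ∀ x y, ‖gradient h x - gradient h y‖ ≤ Lh * ‖x - y‖)
    (F : EuclideanSpace ℝ (Fin n) → ℝ) (hF : ∀ x, F x = f x + h x)
    (xstar : EuclideanSpace ℝ (Fin n))
    (δ : ℝ) (hδ0 : 0 ≤ δ) (hδ : δ < 1 / 2)
    (α A : ℕ → ℝ) (hA0 : A 0 = 0)
    (hαpos : ∀ k, 0 < α (k + 1))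
    (hαeq : ∀ k, A k + α (k + 1) = 2 * L * (α (k + 1)) ^ 2)
    (hArec : ∀ k, A (k + 1) = A k + α (k + 1))
    (x xt z zh : ℕ → EuclideanSpace ℝ (Fin n))
    (g : ℕ → EuclideanSpace ℝ (Fin n) → ℝ)
    (hxt : ∀ k, xt (k + 1) = (A (k + 1))⁻¹ • (A k • x k + α (k + 1) • z k))
    (hg : ∀ k w, g k w =
      (1 / 2) * ‖z k - w‖ ^ 2
        + α (k + 1) * (f (xt (k + 1)) + ⟪gradient f (xt (k + 1)), w - xt (k + 1)⟫ + h w))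
    (hzhmin : ∀ k w, g k (zh (k + 1)) ≤ g k w)
    (hz : ∀ k, g k (z (k + 1)) - g k (zh (k + 1)) ≤ δ * ‖z k - zh (k + 1)‖ ^ 2)
    (hx : ∀ k, x (k + 1) = (A (k + 1))⁻¹ • (A k • x k + α (k + 1) • z (k + 1)))
    (R Rt : ℕ → ℝ)
    (hR : ∀ k, R k = ‖xstar - z k‖)
    (hRt0 : Rt 0 = R 0)
    (hRtS : ∀ k, Rt (k + 1) = max (Rt k) (R (k + 1)))
    (δh : ℝ)
    (hδh : δh = 2 * Real.sqrt ((Lh + 2 * L) * δ / ((1 - Real.sqrt (2 * δ)) ^ 2 * L))) :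
    ∀ N : ℕ, 1 ≤ N →
      A N * (F (x N) - F xstar) ≤
        (1 / 2) * (R 0) ^ 2 - (1 / 2) * (R N) ^ 2
          + δh * ∑ k ∈ range N, Real.sqrt ((k : ℝ) + 2) * (Rt (k + 1)) ^ 2 := by
  intro N _
  have hA_nonneg : ∀ k, 0 ≤ A k := fun k => by
    cases k with
    | zero => exact hA0.ge
    | succ k => rw [hArec, hαeq]; positivity
  have hstep : ∀ k ∈ range N,
      (A (k + 1) * (F (x (k + 1)) - F xstar) + 1 / 2 * R (k + 1) ^ 2)
        - (A k * (F (x k) - F xstar) + 1 / 2 * R k ^ 2)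
        ≤ δh * (√((k : ℝ) + 2) * Rt (k + 1) ^ 2) := by
    intro k _
    have hdecr := stm_ips_step_le hfconvex hfdiff hfsmooth hhconvex hhdiff hhsmooth hLh.le hδ
      (hA_nonneg k) (hαpos k) (hArec k) ((hArec k).trans (hαeq k)) (hxt k) (hx k) (hg k)
      (hzhmin k) (hz k) xstar
    have hzz : ‖z k - z (k + 1)‖ ≤ 2 * Rt (k + 1) := by
      have := norm_sub_le_norm_sub_add_norm_sub (z k) xstar (z (k + 1))
      rw [norm_sub_rev (z k) xstar, ← hR, ← hR] at this
      linarith [le_runningMax_succ hRt0 hRtS k]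
    have herr := stm_ips_error_le hL hLh.le hδ0 hδ (stm_ips_weight_le hA0 hαeq hArec k)
      (by linarith [k.cast_nonneg (α := ℝ)]) hzz (norm_nonneg _)
      ((hR (k + 1)) ▸ (le_runningMax_succ hRt0 hRtS k).2)
    simp only [← hF, ← hR, ← hδh] at hdecr herr
    have hAF : A (k + 1) * F xstar = (A k + α (k + 1)) * F xstar := by rw [hArec]
    linarith
  have htel := Finset.sum_le_sum hstep
  rw [Finset.sum_range_sub (fun k => A k * (F (x k) - F xstar) + 1 / 2 * R k ^ 2),
    ← Finset.mul_sum, hA0] at htel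
  linarith

/-- Lemma F.3 (STM with Inexact Proximal Step): for the STM_IPS iterates applied to the
composite problem `min F = f + h` with `f` convex `L`-smooth and `h` convex `L_h`-smooth,
where each proximal subproblem is solved up to relative accuracy `δ‖z^k − ẑ^{k+1}‖²` with
`0 ≤ δ < 1/2`, one has for every `N ≥ 1`
`A_N (F(x^N) − F(x*)) ≤ ½R₀² − ½R_N² + δ̂·Σ_{k<N} √(k+2)·R̃_{k+1}²`. -/
theorem stm_ips_key_inequality {n : ℕ}
    (f h : EuclideanSpace ℝ (Fin n) → ℝ) (L Lh : ℝ)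
    (hL : 0 < L) (hLh : 0 < Lh)
    (hfconvex : ConvexOn ℝ Set.univ f) (hfdiff : Differentiable ℝ f)
    (hfsmooth : ∀ x y, ‖gradient f x - gradient f y‖ ≤ L * ‖x - y‖)
    (hhconvex : ConvexOn ℝ Set.univ h) (hhdiff : Differentiable ℝ h)
    (hhsmooth : ∀ x y, ‖gradient h x - gradient h y‖ ≤ Lh * ‖x - y‖)
    (F : EuclideanSpace ℝ (Fin n) → ℝ) (hF : ∀ x, F x = f x + h x)
    (xstar : EuclideanSpace ℝ (Fin n)) (hmin : ∀ x, F xstar ≤ F x)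
    (δ : ℝ) (hδ0 : 0 ≤ δ) (hδ : δ < 1 / 2)
    (α A : ℕ → ℝ) (hα0 : α 0 = 0) (hA0 : A 0 = 0)
    (hαpos : ∀ k, 0 < α (k + 1))
    (hαeq : ∀ k, A k + α (k + 1) = 2 * L * (α (k + 1)) ^ 2)
    (hArec : ∀ k, A (k + 1) = A k + α (k + 1))
    (x xt z zh : ℕ → EuclideanSpace ℝ (Fin n))
    (g : ℕ → EuclideanSpace ℝ (Fin n) → ℝ)
    (hxt0 : xt 0 = x 0) (hz0 : z 0 = x 0)
    (hxt : ∀ k, xt (k + 1) = (A (k + 1))⁻¹ • (A k • x k + α (k + 1) • z k))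
    (hg : ∀ k w, g k w =
      (1 / 2) * ‖z k - w‖ ^ 2
        + α (k + 1) * (f (xt (k + 1)) + ⟪gradient f (xt (k + 1)), w - xt (k + 1)⟫ + h w))
    (hzhmin : ∀ k w, g k (zh (k + 1)) ≤ g k w)
    (hz : ∀ k, g k (z (k + 1)) - g k (zh (k + 1)) ≤ δ * ‖z k - zh (k + 1)‖ ^ 2)
    (hx : ∀ k, x (k + 1) = (A (k + 1))⁻¹ • (A k • x k + α (k + 1) • z (k + 1)))
    (R Rt : ℕ → ℝ)
    (hR : ∀ k, R k = ‖xstar - z k‖)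
    (hRt0 : Rt 0 = R 0)
    (hRtS : ∀ k, Rt (k + 1) = max (Rt k) (R (k + 1)))
    (δh : ℝ)
    (hδh : δh = 2 * Real.sqrt ((Lh + 2 * L) * δ / ((1 - Real.sqrt (2 * δ)) ^ 2 * L))) :
    ∀ N : ℕ, 1 ≤ N →
      A N * (F (x N) - F xstar) ≤
        (1 / 2) * (R 0) ^ 2 - (1 / 2) * (R N) ^ 2
          + δh * ∑ k ∈ range N, Real.sqrt ((k : ℝ) + 2) * (Rt (k + 1)) ^ 2 :=
  stm_ips_key_inequality_general f h L Lh hL hLh hfconvex hfdiff hfsmooth hhconvex hhdiff hhsmooth F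
    hF xstar δ hδ0 hδ α A hA0 hαpos hαeq hArec x xt z zh g hxt hg hzhmin hz hx R Rt hR hRt0 hRtS δh
    hδh
end

section
/- Let ψ : ℝᵐ → ℝ be convex and L_ψ-smooth, set L̃ = 2L_ψ, let δ ≥ 0 and let N ≥ 1 be an integer. Let α_0 = A_0 = 0 and, for k ≥ 0, let α_{k+1} > 0 satisfy 2L̃α_{k+1}² = A_k + α_{k+1} with A_{k+1} = A_k + α_{k+1}. Let ỹ⁰ = z⁰ = y⁰ ∈ ℝᵐ and, for k ≥ 0, let G^{k+1}, m^{k+1} ∈ ℝᵐ be vectors with ‖m^{k+1} − ∇ψ(ỹ^{k+1})‖₂ ≤ δ, and define ỹ^{k+1} = (A_k y^k + α_{k+1} z^k)/A_{k+1}, z^{k+1} = z^k − α_{k+1}·G^{k+1}, and y^{k+1} = (A_k y^k + α_{k+1} z^{k+1})/A_{k+1}. Then for every z ∈ ℝᵐ: A_N·ψ(y^N) ≤ ½‖z − z⁰‖₂² − ½‖z − z^N‖₂² + Σ_{k=0}^{N−1} α_{k+1}·(ψ(ỹ^{k+1}) + ⟨G^{k+1}, z − ỹ^{k+1}⟩)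 + Σ_{k=0}^{N−1} A_k·⟨G^{k+1} − m^{k+1}, y^k − ỹ^{k+1}⟩ + Σ_{k=0}^{N−1} (A_{k+1}/(2L̃))·‖m^{k+1} − G^{k+1}‖₂² + δ·Σ_{k=0}^{N−1} A_k·‖y^k − ỹ^{k+1}‖₂ + δ²·Σ_{k=0}^{N−1} A_{k+1}/L̃. -/
open Finset
open scoped RealInnerProductSpace

/-!
Along the iterates, the potential `A_k ψ(y^k) + ½‖w - z^k‖²` increases in one step by at most
the `k`-th summand of the bound, and summing telescopes. In one step, write `Δ = z^{k+1} - z^k`.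
The two averaging rules give `A_{k+1} (y^{k+1} - ỹ^{k+1}) = α_{k+1} Δ`, so the descent lemma at
`ỹ^{k+1}` costs `‖Δ‖² / 8` because `A_{k+1} = 2 L̃ α_{k+1}²`. Convexity at `ỹ^{k+1}`, with the
inexact gradient `m^{k+1}`, accounts for `A_k ψ(y^k)` up to the bias `δ`, and the errors `m - G` and
`∇ψ - m` are absorbed by Young's inequality at costs `‖Δ‖² / 4` and `‖Δ‖² / 8`. The gradient step
`α_{k+1} G = -Δ` pays for all of this: it contributes `-‖Δ‖²`, of which `-½‖Δ‖²` is consumed by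
`½‖w - z^k‖² - ½‖w - z^{k+1}‖² = ⟪w - z^k, Δ⟫ - ½‖Δ‖²`.
-/

theorem le_add_sum_range_of_succ_le_add {M : Type*} [AddCommMonoid M] [PartialOrder M]
    [IsOrderedAddMonoid M] {f c : ℕ → M} (h : ∀ k, f (k + 1) ≤ f k + c k) (n : ℕ) :
    f n ≤ f 0 + ∑ k ∈ range n, c k := by
  induction n with
  | zero => simp
  | succ n ih =>
    rw [sum_range_succ, ← add_assoc]
    exact (h n).trans (add_le_add_left ih _)

variable {E : Type*} [NormedAddCommGroup E] [InnerProductSpace ℝ E]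

theorem real_inner_le_mul_norm_sq_add_div (u v : E) {c : ℝ} (hc : 0 < c) :
    ⟪u, v⟫ ≤ c * ‖u‖ ^ 2 + ‖v‖ ^ 2 / (4 * c) := by
  have hamgm : c * ‖u‖ ^ 2 + ‖v‖ ^ 2 / (4 * c) - ‖u‖ * ‖v‖ = (2 * c * ‖u‖ - ‖v‖) ^ 2 / (4 * c) := by
    field_simp
    ring
  have : 0 ≤ (2 * c * ‖u‖ - ‖v‖) ^ 2 / (4 * c) := by positivity
  linarith [real_inner_le_norm u v]

theorem spdstm_half_sq_dist_sub_eq {A a : ℝ} {y z yt z' G : E} (hAa : A + a ≠ 0)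
    (hyt : yt = (A + a)⁻¹ • (A • y + a • z)) (hz' : z' = z - a • G) (w : E) :
    (1 / 2) * ‖w - z‖ ^ 2 - (1 / 2) * ‖w - z'‖ ^ 2
      = -(a * ⟪G, w - yt⟫ + A * ⟪G, y - yt⟫) - ‖z' - z‖ ^ 2 / 2 := by
  have hshift : a • (w - z) = a • (w - yt) + A • (y - yt) := by
    have haz : a • z = (A + a) • yt - A • y := by
      rw [hyt, smul_inv_smul₀ hAa]
      abel
    rw [smul_sub, smul_sub, smul_sub, haz, add_smul]
    abel
  have hinner : ⟪w - z, z' - z⟫ = -(a * ⟪G, w - yt⟫ + A * ⟪G, y - yt⟫) := by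
    rw [hz', sub_sub_cancel_left, inner_neg_right, real_inner_smul_right, ← real_inner_smul_left,
      hshift, inner_add_left, real_inner_smul_left, real_inner_smul_left, real_inner_comm G,
      real_inner_comm G]
  have hw : ‖w - z'‖ ^ 2 = ‖w - z‖ ^ 2 - 2 * ⟪w - z, z' - z⟫ + ‖z' - z‖ ^ 2 := by
    rw [← norm_sub_sq_real, sub_sub_sub_cancel_right]
  rw [hw, hinner]
  ring

variable [CompleteSpace E] {ψ : E → ℝ}

theorem ConvexOn.add_inner_gradient_le (hconv : ConvexOn ℝ Set.univ ψ) {x : E}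
    (hψ : DifferentiableAt ℝ ψ x) (y : E) : ψ x + ⟪gradient ψ x, y - x⟫ ≤ ψ y := by
  have hderiv : HasDerivAt (ψ ∘ AffineMap.lineMap (k := ℝ) x y) ⟪gradient ψ x, y - x⟫ 0 :=
    hψ.hasGradientAt.hasFDerivAt.comp_hasDerivAt_of_eq 0 AffineMap.hasDerivAt_lineMap
      (AffineMap.lineMap_apply_zero x y).symm
  have hslope := (hconv.comp_affineMap (AffineMap.lineMap x y)).le_slope_of_hasDerivAt
    (Set.mem_univ 0) (Set.mem_univ 1) one_pos hderiv
  simp only [slope_def_field, Function.comp_apply, AffineMap.lineMap_apply_zero,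
    AffineMap.lineMap_apply_one, sub_zero, div_one] at hslope
  linarith

theorem ConvexOn.add_inner_le_add_of_norm_sub_gradient_le (hconv : ConvexOn ℝ Set.univ ψ)
    {x : E} (hψ : DifferentiableAt ℝ ψ x) {m : E} {δ : ℝ} (hm : ‖m - gradient ψ x‖ ≤ δ)
    (y : E) : ψ x + ⟪m, y - x⟫ ≤ ψ y + δ * ‖y - x‖ := by
  have hbias : ⟪m - gradient ψ x, y - x⟫ ≤ δ * ‖y - x‖ :=
    (real_inner_le_norm _ _).trans (mul_le_mul_of_nonneg_right hm (norm_nonneg _))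
  rw [inner_sub_left] at hbias
  linarith [hconv.add_inner_gradient_le hψ y]

theorem DifferentiableAt.hasDerivAt_apply_add_smul {x v : E} {t : ℝ}
    (hψ : DifferentiableAt ℝ ψ (x + t • v)) :
    HasDerivAt (fun s : ℝ => ψ (x + s • v)) ⟪gradient ψ (x + t • v), v⟫ t := by
  have hline : HasDerivAt (fun s : ℝ => x + s • v) v t := by
    simpa using ((hasDerivAt_id t).smul_const v).const_add x
  exact hψ.hasGradientAt.hasFDerivAt.comp_hasDerivAt t hline

theorem apply_add_le_add_inner_gradient_add {L : ℝ} (hψ : Differentiable ℝ ψ)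
    (hL : ∀ x y, ‖gradient ψ x - gradient ψ y‖ ≤ L * ‖x - y‖) (x v : E) :
    ψ (x + v) ≤ ψ x + ⟪gradient ψ x, v⟫ + L / 2 * ‖v‖ ^ 2 := by
  let g' (t : ℝ) : ℝ := ⟪gradient ψ (x + t • v) - gradient ψ x, v⟫ - L * t * ‖v‖ ^ 2
  have hg : ∀ t, HasDerivAt
      (fun t => ψ (x + t • v) - t * ⟪gradient ψ x, v⟫ - L / 2 * t ^ 2 * ‖v‖ ^ 2) (g' t) t := by
    intro t
    refine ((((hψ _).hasDerivAt_apply_add_smul (x := x) (v := v)).sub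
      ((hasDerivAt_id t).mul_const ⟪gradient ψ x, v⟫)).sub
      (((hasDerivAt_pow 2 t).const_mul (L / 2)).mul_const (‖v‖ ^ 2))).congr_deriv ?_
    simp only [g', inner_sub_left]
    ring
  have hg' : ∀ t ∈ interior (Set.Ici (0 : ℝ)), g' t ≤ 0 := by
    intro t ht
    rw [interior_Ici, Set.mem_Ioi] at ht
    have hLt := hL (x + t • v) x
    rw [add_sub_cancel_left, norm_smul, Real.norm_eq_abs, abs_of_pos ht] at hLt
    have hcs := real_inner_le_norm (gradient ψ (x + t • v) - gradient ψ x) v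
    nlinarith [norm_nonneg v]
  have := antitoneOn_of_hasDerivWithinAt_nonpos (convex_Ici 0)
    (fun t _ => (hg t).continuousAt.continuousWithinAt) (fun t _ => (hg t).hasDerivWithinAt) hg'
    Set.self_mem_Ici (Set.mem_Ici.mpr zero_le_one) zero_le_one
  simp only [zero_smul, add_zero, one_smul] at this
  linarith

theorem spdstm_descent_step {L : ℝ} (hψ : Differentiable ℝ ψ)
    (hL : ∀ x y, ‖gradient ψ x - gradient ψ y‖ ≤ L * ‖x - y‖) {A a : ℝ} {yt y' Δ : E}
    (hAa : 0 < A + a) (hcoef : 4 * L * a ^ 2 = A + a) (hy' : (A + a) • (y' - yt) = a • Δ) :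
    (A + a) * ψ y' ≤ (A + a) * ψ yt + a * ⟪gradient ψ yt, Δ⟫ + ‖Δ‖ ^ 2 / 8 := by
  have hdescent := apply_add_le_add_inner_gradient_add hψ hL yt (y' - yt)
  rw [add_sub_cancel] at hdescent
  have hinner : (A + a) * ⟪gradient ψ yt, y' - yt⟫ = a * ⟪gradient ψ yt, Δ⟫ := by
    rw [← real_inner_smul_right, hy', real_inner_smul_right]
  have hsq : (A + a) ^ 2 * ‖y' - yt‖ ^ 2 = a ^ 2 * ‖Δ‖ ^ 2 := by
    have := congrArg (‖·‖ ^ 2) hy'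
    simpa only [norm_smul, mul_pow, Real.norm_eq_abs, sq_abs] using this
  have hquad : (A + a) * (L / 2 * ‖y' - yt‖ ^ 2) = ‖Δ‖ ^ 2 / 8 := by
    refine mul_left_cancel₀ hAa.ne' ?_
    linear_combination (L / 2) * hsq + (‖Δ‖ ^ 2 / 8) * hcoef
  have := mul_le_mul_of_nonneg_left hdescent hAa.le
  rwa [mul_add, mul_add, hinner, hquad] at this

theorem spdstm_step {L Lt : ℝ} (hconv : ConvexOn ℝ Set.univ ψ) (hψ : Differentiable ℝ ψ)
    (hL : ∀ x y, ‖gradient ψ x - gradient ψ y‖ ≤ L * ‖x - y‖) (hLt : Lt = 2 * L)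
    {A a δ : ℝ} {y z yt y' z' G m : E} (hA : 0 ≤ A) (hAa : 0 < A + a)
    (hcoef : 2 * Lt * a ^ 2 = A + a) (hyt : yt = (A + a)⁻¹ • (A • y + a • z))
    (hm : ‖m - gradient ψ yt‖ ≤ δ) (hz' : z' = z - a • G)
    (hy' : y' = (A + a)⁻¹ • (A • y + a • z')) (w : E) :
    (A + a) * ψ y' ≤ A * ψ y + (1 / 2) * ‖w - z‖ ^ 2 - (1 / 2) * ‖w - z'‖ ^ 2
      + a * (ψ yt + ⟪G, w - yt⟫) + A * ⟪G - m, y - yt⟫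
      + ((A + a) / (2 * Lt)) * ‖m - G‖ ^ 2 + δ * (A * ‖y - yt‖) + δ ^ 2 * ((A + a) / Lt) := by
  have hLt_ne : Lt ≠ 0 := by
    rintro rfl
    linarith
  have hc₁ : (A + a) / (2 * Lt) = a ^ 2 := by
    rw [← hcoef]
    field_simp
  have hc₂ : (A + a) / Lt = 2 * a ^ 2 := by
    rw [← hcoef]
    field_simp
  rw [hc₁, hc₂]
  set g := gradient ψ yt
  have hΔ : (A + a) • (y' - yt) = a • (z' - z) := by
    rw [hy', hyt, ← smul_sub, smul_inv_smul₀ hAa.ne', add_sub_add_left_eq_sub, smul_sub]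
  have hdescent := spdstm_descent_step hψ hL hAa (by rw [← hcoef, hLt]; ring) hΔ
  have hsplit : a * ⟪g, z' - z⟫
      = -‖z' - z‖ ^ 2 + ⟪a • (m - G), z' - z⟫ + ⟪a • (g - m), z' - z⟫ := by
    have hG : a • G = -(z' - z) := by
      rw [hz']
      abel
    rw [← real_inner_self_eq_norm_sq, ← inner_neg_left, ← hG, ← inner_add_left, ← inner_add_left,
      ← real_inner_smul_left, ← smul_add, ← smul_add]
    congr 2
    abel
  have hyoung₁ := real_inner_le_mul_norm_sq_add_div (a • (m - G)) (z' - z) one_pos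
  have hyoung₂ := real_inner_le_mul_norm_sq_add_div (a • (g - m)) (z' - z) two_pos
  have hmG : ‖a • (m - G)‖ ^ 2 = a ^ 2 * ‖m - G‖ ^ 2 := by
    rw [norm_smul, mul_pow, Real.norm_eq_abs, sq_abs]
  have hgm : ‖a • (g - m)‖ ^ 2 ≤ a ^ 2 * δ ^ 2 := by
    rw [norm_smul, mul_pow, Real.norm_eq_abs, sq_abs, norm_sub_rev]
    exact mul_le_mul_of_nonneg_left (pow_le_pow_left₀ (norm_nonneg _) hm 2) (sq_nonneg a)
  have hinexact := mul_le_mul_of_nonneg_left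
    (hconv.add_inner_le_add_of_norm_sub_gradient_le (hψ yt) hm y) hA
  have hdist := spdstm_half_sq_dist_sub_eq hAa.ne' hyt hz' w
  rw [inner_sub_left]
  linarith

theorem spdstm_key_inequality_general {d : ℕ}
    (ψ : EuclideanSpace ℝ (Fin d) → ℝ) (Lψ : ℝ)
    (hψconvex : ConvexOn ℝ Set.univ ψ)
    (hψdiff : Differentiable ℝ ψ)
    (hψsmooth : ∀ x y, ‖gradient ψ x - gradient ψ y‖ ≤ Lψ * ‖x - y‖)
    (Lt : ℝ) (hLt : Lt = 2 * Lψ)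
    (δ : ℝ)
    (N : ℕ)
    (α A : ℕ → ℝ) (hA0 : A 0 = 0)
    (hαpos : ∀ k, 0 < α (k + 1))
    (hαeq : ∀ k, 2 * Lt * (α (k + 1)) ^ 2 = A k + α (k + 1))
    (hArec : ∀ k, A (k + 1) = A k + α (k + 1))
    (y z yt G M : ℕ → EuclideanSpace ℝ (Fin d))
    (hbias : ∀ k, ‖M (k + 1) - gradient ψ (yt (k + 1))‖ ≤ δ)
    (hyt : ∀ k, yt (k + 1) = (A (k + 1))⁻¹ • (A k • y k + α (k + 1) • z k))
    (hz : ∀ k, z (k + 1) = z k - α (k + 1) • G (k + 1))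
    (hy : ∀ k, y (k + 1) = (A (k + 1))⁻¹ • (A k • y k + α (k + 1) • z (k + 1))) :
    ∀ w : EuclideanSpace ℝ (Fin d),
      A N * ψ (y N) ≤
        (1 / 2) * ‖w - z 0‖ ^ 2 - (1 / 2) * ‖w - z N‖ ^ 2
          + ∑ k ∈ range N, α (k + 1) * (ψ (yt (k + 1)) + ⟪G (k + 1), w - yt (k + 1)⟫)
          + ∑ k ∈ range N, A k * ⟪G (k + 1) - M (k + 1), y k - yt (k + 1)⟫
          + ∑ k ∈ range N, (A (k + 1) / (2 * Lt)) * ‖M (k + 1) - G (k + 1)‖ ^ 2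
          + δ * ∑ k ∈ range N, A k * ‖y k - yt (k + 1)‖
          + δ ^ 2 * ∑ k ∈ range N, A (k + 1) / Lt := by
  intro w
  have hA_nonneg : ∀ k, 0 ≤ A k := by
    intro k
    induction k with
    | zero => exact hA0.ge
    | succ k ih => linarith [hArec k, hαpos k]
  let Φ (k : ℕ) : ℝ := A k * ψ (y k) + (1 / 2) * ‖w - z k‖ ^ 2
  let c (k : ℕ) : ℝ := α (k + 1) * (ψ (yt (k + 1)) + ⟪G (k + 1), w - yt (k + 1)⟫)
    + A k * ⟪G (k + 1) - M (k + 1), y k - yt (k + 1)⟫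
    + (A (k + 1) / (2 * Lt)) * ‖M (k + 1) - G (k + 1)‖ ^ 2
    + δ * (A k * ‖y k - yt (k + 1)‖) + δ ^ 2 * (A (k + 1) / Lt)
  have hstep : ∀ k, Φ (k + 1) ≤ Φ k + c k := by
    intro k
    have := spdstm_step hψconvex hψdiff hψsmooth hLt (hA_nonneg k)
      (by linarith [hA_nonneg k, hαpos k]) (hαeq k) (hArec k ▸ hyt k) (hbias k) (hz k)
      (hArec k ▸ hy k) w
    simp only [Φ, c, hArec k]
    linarith
  have htel := le_add_sum_range_of_succ_le_add hstep N
  simp only [Φ, c, sum_add_distrib, ← mul_sum, hA0, zero_mul, zero_add] at htel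
  linarith

/-- Lemma G.2 (key inequality for SPDSTM): for the SPDSTM iterates applied to a convex
`L_ψ`-smooth function `ψ` with biased stochastic gradients `G^{k+1}` whose conditional means
`m^{k+1}` satisfy `‖m^{k+1} − ∇ψ(ỹ^{k+1})‖ ≤ δ`, one has the pathwise bound on
`A_N ψ(y^N)` for every `z`. -/
theorem spdstm_key_inequality {d : ℕ}
    (ψ : EuclideanSpace ℝ (Fin d) → ℝ) (Lψ : ℝ) (hLψ : 0 < Lψ)
    (hψconvex : ConvexOn ℝ Set.univ ψ)
    (hψdiff : Differentiable ℝ ψ)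
    (hψsmooth : ∀ x y, ‖gradient ψ x - gradient ψ y‖ ≤ Lψ * ‖x - y‖)
    (Lt : ℝ) (hLt : Lt = 2 * Lψ)
    (δ : ℝ) (hδ : 0 ≤ δ)
    (N : ℕ) (hN : 1 ≤ N)
    (α A : ℕ → ℝ) (hα0 : α 0 = 0) (hA0 : A 0 = 0)
    (hαpos : ∀ k, 0 < α (k + 1))
    (hαeq : ∀ k, 2 * Lt * (α (k + 1)) ^ 2 = A k + α (k + 1))
    (hArec : ∀ k, A (k + 1) = A k + α (k + 1))
    (y z yt G M : ℕ → EuclideanSpace ℝ (Fin d))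
    (hyt0 : yt 0 = y 0) (hz0 : z 0 = y 0)
    (hbias : ∀ k, ‖M (k + 1) - gradient ψ (yt (k + 1))‖ ≤ δ)
    (hyt : ∀ k, yt (k + 1) = (A (k + 1))⁻¹ • (A k • y k + α (k + 1) • z k))
    (hz : ∀ k, z (k + 1) = z k - α (k + 1) • G (k + 1))
    (hy : ∀ k, y (k + 1) = (A (k + 1))⁻¹ • (A k • y k + α (k + 1) • z (k + 1))) :
    ∀ w : EuclideanSpace ℝ (Fin d),
      A N * ψ (y N) ≤
        (1 / 2) * ‖w - z 0‖ ^ 2 - (1 / 2) * ‖w - z N‖ ^ 2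
          + ∑ k ∈ range N, α (k + 1) * (ψ (yt (k + 1)) + ⟪G (k + 1), w - yt (k + 1)⟫)
          + ∑ k ∈ range N, A k * ⟪G (k + 1) - M (k + 1), y k - yt (k + 1)⟫
          + ∑ k ∈ range N, (A (k + 1) / (2 * Lt)) * ‖M (k + 1) - G (k + 1)‖ ^ 2
          + δ * ∑ k ∈ range N, A k * ‖y k - yt (k + 1)‖
          + δ ^ 2 * ∑ k ∈ range N, A (k + 1) / Lt :=
  spdstm_key_inequality_general ψ Lψ hψconvex hψdiff hψsmooth Lt hLt δ N α A hA0 hαpos hαeq hArec y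
    z yt G M hbias hyt hz hy
end

section
/- Let A : ℝⁿ → ℝᵐ be linear, let μ_ψ > 0, L_ψ > 0, let α_0 = A_0 = 1/L_ψ and, for k ≥ 0, let α_{k+1} > 0 satisfy A_{k+1} = A_k + α_{k+1} and A_{k+1}(1 + A_kμ_ψ) = α_{k+1}²L_ψ. Let ỹ⁰ = z⁰ = y⁰ ∈ ℝᵐ and let G⁰, G¹, G², … be vectors in the range of A. Iterate for k ≥ 0: ỹ^{k+1} = (A_k y^k + α_{k+1} z^k)/A_{k+1}; z^{k+1} = z⁰/(1 + A_{k+1}μ_ψ) + Σ_{l=0}^{k+1} (α_lμ_ψ/(1 + A_{k+1}μ_ψ))·ỹ^l − (1/(1 + A_{k+1}μ_ψ))·Σ_{l=0}^{k+1} α_l·G^l; y^{k+1} = (A_k y^k + α_{k+1} z^{k+1})/A_{k+1}. Then for all k ≥ 0 the iterates ỹ^k, z^k, y^k lie in the affine subspace y⁰ + (Ker Aᵀ)^⊥ of ℝᵐ. -/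
open Finset
open scoped RealInnerProductSpace

/-- Theorem 5.8: the iterates of SSTM_sc applied to the dual function lie in the affine
subspace `y⁰ + (Ker Aᵀ)^⊥`, since the stochastic gradients `G^l` lie in the range of `A`
(which equals `(Ker Aᵀ)^⊥`). -/
theorem sstm_sc_iterates_in_affine_subspace {n d : ℕ}
    (A : EuclideanSpace ℝ (Fin n) →ₗ[ℝ] EuclideanSpace ℝ (Fin d))
    (μψ Lψ : ℝ) (hμψ : 0 < μψ) (hLψ : 0 < Lψ)
    (α Aseq : ℕ → ℝ) (hα0 : α 0 = 1 / Lψ) (hA0 : Aseq 0 = 1 / Lψ)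
    (hαpos : ∀ k, 0 < α (k + 1))
    (hArec : ∀ k, Aseq (k + 1) = Aseq k + α (k + 1))
    (hαeq : ∀ k, Aseq (k + 1) * (1 + Aseq k * μψ) = (α (k + 1)) ^ 2 * Lψ)
    (y z yt G : ℕ → EuclideanSpace ℝ (Fin d))
    (hG : ∀ l, G l ∈ LinearMap.range A)
    (hyt0 : yt 0 = y 0) (hz0 : z 0 = y 0)
    (hyt : ∀ k, yt (k + 1) = (Aseq (k + 1))⁻¹ • (Aseq k • y k + α (k + 1) • z k))
    (hz : ∀ k, z (k + 1) =
      (1 + Aseq (k + 1) * μψ)⁻¹ • z 0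
        + ∑ l ∈ range (k + 2), (α l * μψ / (1 + Aseq (k + 1) * μψ)) • yt l
        - (1 + Aseq (k + 1) * μψ)⁻¹ • ∑ l ∈ range (k + 2), α l • G l)
    (hy : ∀ k, y (k + 1) = (Aseq (k + 1))⁻¹ • (Aseq k • y k + α (k + 1) • z (k + 1))) :
    ∀ k : ℕ,
      yt k - y 0 ∈ (LinearMap.ker (LinearMap.adjoint A))ᗮ ∧
      z k - y 0 ∈ (LinearMap.ker (LinearMap.adjoint A))ᗮ ∧
      y k - y 0 ∈ (LinearMap.ker (LinearMap.adjoint A))ᗮ := by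
  set S := (LinearMap.ker (LinearMap.adjoint A))ᗮ with hSdef
  have hS : ∀ v, v ∈ LinearMap.range A → v ∈ S := by
    rintro v ⟨x, rfl⟩
    rw [hSdef, Submodule.mem_orthogonal]
    intro w hw
    rw [LinearMap.mem_ker] at hw
    rw [← LinearMap.adjoint_inner_left, hw, inner_zero_left]
  have hApos : ∀ k, 0 < Aseq k := by
    intro k
    induction k with
    | zero => rw [hA0]; positivity
    | succ k ih => rw [hArec k]; exact add_pos ih (hαpos k)
  have hAsum : ∀ k, Aseq k = ∑ l ∈ range (k + 1), α l := by
    intro k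
    induction k with
    | zero => simp [hA0, hα0]
    | succ k ih => rw [Finset.sum_range_succ, ← ih, hArec k]
  intro k
  induction k using Nat.strong_induction_on with
  | _ k ih =>
    match k with
    | 0 =>
      refine ⟨?_, ?_, ?_⟩ <;> simp [hyt0, hz0, Submodule.zero_mem]
    | k + 1 =>
      obtain ⟨ihyt, ihz, ihy⟩ := ih k (Nat.lt_succ_self k)
      have hAne : Aseq (k + 1) ≠ 0 := (hApos (k + 1)).ne'
      have hytmem : yt (k + 1) - y 0 ∈ S := by
        have heq : yt (k + 1) - y 0 =
            (Aseq (k + 1))⁻¹ • (Aseq k • (y k - y 0) + α (k + 1) • (z k - y 0)) := by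
          rw [hyt k]
          match_scalars
          · field_simp
          · field_simp
          · field_simp
            linarith [hArec k]
        rw [heq]
        exact Submodule.smul_mem _ _ (Submodule.add_mem _
          (Submodule.smul_mem _ _ ihy) (Submodule.smul_mem _ _ ihz))
      set β := 1 + Aseq (k + 1) * μψ with hβdef
      have hβpos : 0 < β := by
        have h := mul_pos (hApos (k + 1)) hμψ
        linarith
      have hβne : β ≠ 0 := hβpos.ne'
      have hzmem : z (k + 1) - y 0 ∈ S := by
        have heq : z (k + 1) - y 0 =
            (∑ l ∈ range (k + 2), (α l * μψ / β) • (yt l - y 0))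
              - β⁻¹ • ∑ l ∈ range (k + 2), α l • G l := by
          rw [hz k, hz0]
          have h1 : ∑ l ∈ range (k + 2), (α l * μψ / β) • (yt l - y 0)
              = (∑ l ∈ range (k + 2), (α l * μψ / β) • yt l)
                - (Aseq (k + 1) * μψ / β) • y 0 := by
            simp only [smul_sub]
            rw [Finset.sum_sub_distrib, ← Finset.sum_smul]
            congr 2
            rw [hAsum (k + 1)]
            rw [Finset.sum_mul, Finset.sum_div]
          rw [h1]
          have h2 : (Aseq (k + 1) * μψ / β) • (y 0) = y 0 - β⁻¹ • y 0 := by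
            match_scalars
            field_simp
            linarith [hβdef]
          rw [h2]
          abel
        rw [heq]
        refine Submodule.sub_mem _ (Submodule.sum_mem _ ?_)
          (Submodule.smul_mem _ _ (Submodule.sum_mem _ fun l _ =>
            Submodule.smul_mem _ _ (hS _ (hG l))))
        intro l hl
        refine Submodule.smul_mem _ _ ?_
        rcases Nat.lt_succ_iff_lt_or_eq.mp (Finset.mem_range.mp hl) with h | h
        · exact (ih l h).1
        · rw [h]; exact hytmem
      have hymem : y (k + 1) - y 0 ∈ S := by
        have heq : y (k + 1) - y 0 =
            (Aseq (k + 1))⁻¹ • (Aseq k • (y k - y 0) + α (k + 1) • (z (k + 1) - y 0)) := by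
          rw [hy k]
          match_scalars
          · field_simp
          · field_simp
          · field_simp
            linarith [hArec k]
        rw [heq]
        exact Submodule.smul_mem _ _ (Submodule.add_mem _
          (Submodule.smul_mem _ _ ihy) (Submodule.smul_mem _ _ hzmem))
      exact ⟨hytmem, hzmem, hymem⟩
end
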